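/- arXiv:2005.05291 — 4 statements merged into one kernel-verified Lean document; each statement's English description precedes it below -/
import Mathlib

section
/- (Existence of arcs.) Let 1 ≤ d ≤ k−1. For all reals δ, ε > 0 with δ + δ^(1−1/(k−d)) > 1 + ε there exists t_0 such that for all t ≥ t_0 the following holds: if R is a k-graph on t vertices with at least one edge and (C_S) is a d-vicinity in R such that every C_S (for S an edge of ∂_d(R)) has at least δ·(t choose k−d) edges, then the vicinity admits an arc. -/
/-!
Put `m = k - d` and `t = |V|`, and fix `S ∈ ∂_d R`. Averaging over the vertices gives a vertex
`v` whose link in `C_S` has at least about `δ · C(t, m-1)` members. Swapping a vertex `v₁ ∈ S`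
for `v` gives another `d`-set `S'` of the shadow; the members of `C_{S'}` avoiding `v₁` are still
about `δ · C(t, m)` many, so by the Lovász form of Kruskal–Katona their shadow has at least about
`δ^(1 - 1/m) · C(t, m-1)` members. Since `δ + δ^(1 - 1/m) > 1`, these two families of
`(m-1)`-subsets of `V` meet in some `Y`, with `Y ∪ {v} ∈ C_S` and `Y ∪ {w} ∈ C_{S'}`, and
`v₁, S \ {v₁}, v, Y, w` is an arc.
-/

open Finset

variable {A : Type*} [DecidableEq A]

/-- The set of vertices occupying positions `i, …, i+k-1` of the walk `w`. -/
def walkEdgeAt (k : ℕ) (w : List A) (i : ℕ) : Finset A :=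
  ((w.drop i).take k).toFinset

/-- `w` is a tight walk in the `k`-graph with edge set `E`: it has at least `k`
vertices and every `k` consecutive vertices form an edge of `E`. -/
def IsTightWalk (k : ℕ) (E : Finset (Finset A)) (w : List A) : Prop :=
  k ≤ w.length ∧ ∀ i, i + k ≤ w.length → walkEdgeAt k w i ∈ E

/-- The edge `e` appears on the walk `w` (as `k` consecutive vertices). -/
def EdgeOnWalk (k : ℕ) (w : List A) (e : Finset A) : Prop :=
  ∃ i, i + k ≤ w.length ∧ walkEdgeAt k w i = e

/-- A `k`-uniform edge set is tightly connected if any two of its edges lie on a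
common tight walk all of whose edges belong to it. -/
def TightlyConnected (k : ℕ) (E : Finset (Finset A)) : Prop :=
  ∀ e₁ ∈ E, ∀ e₂ ∈ E, ∃ w : List A, IsTightWalk k E w ∧ EdgeOnWalk k w e₁ ∧ EdgeOnWalk k w e₂

/-- `w` is a closed tight walk: every cyclic interval of `k` consecutive vertices
forms an edge of `E`.  Its length is `w.length`. -/
def IsClosedTightWalk (k : ℕ) (E : Finset (Finset A)) (w : List A) : Prop :=
  k ≤ w.length ∧ ∀ i < w.length, ((w.rotate i).take k).toFinset ∈ E

/-- A tight Hamilton cycle: a cyclic ordering of all the vertices in which every `k`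
cyclically consecutive vertices form an edge. -/
def HasTightHamCycle (k : ℕ) (V : Finset A) (E : Finset (Finset A)) : Prop :=
  ∃ w : List A, w.Nodup ∧ w.toFinset = V ∧ IsClosedTightWalk k E w

/-- The `j`-th shadow: all `j`-element sets contained in some edge. -/
def shadow (j : ℕ) (E : Finset (Finset A)) : Finset (Finset A) :=
  E.biUnion fun e => e.powersetCard j

/-- The link graph of `S`: the `(k-d)`-graph whose edges are `e \ S` for edges `e ⊇ S`. -/
def link (S : Finset A) (E : Finset (Finset A)) : Finset (Finset A) :=
  (E.filter fun e => S ⊆ e).image fun e => e \ S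

/-- `E` has a fractional matching of size at least `m`. -/
def HasFracMatching (E : Finset (Finset A)) (m : ℝ) : Prop :=
  ∃ w : Finset A → ℝ,
    (∀ e ∈ E, 0 ≤ w e ∧ w e ≤ 1) ∧
    (∀ v : A, ∑ e ∈ E.filter (fun e' => v ∈ e'), w e ≤ 1) ∧
    m ≤ ∑ e ∈ E, w e

/-- `E` has a `b`-fractional matching of size at least `m` (vertex constraints on `V`). -/
def HasBFracMatching (V : Finset A) (E : Finset (Finset A)) (b : A → ℝ) (m : ℝ) : Prop :=
  ∃ w : Finset A → ℝ,
    (∀ e ∈ E, 0 ≤ w e ∧ w e ≤ 1) ∧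
    (∀ v ∈ V, ∑ e ∈ E.filter (fun e' => v ∈ e'), w e ≤ b v) ∧
    m ≤ ∑ e ∈ E, w e

/-- `γ`-robustly matchable: every vertex weighting with values in `[1-γ,1]` is realised
exactly by an edge weighting with values in `[0,1]`. -/
def RobustlyMatchable (γ : ℝ) (V : Finset A) (E : Finset (Finset A)) : Prop :=
  ∀ b : A → ℝ, (∀ v ∈ V, 1 - γ ≤ b v ∧ b v ≤ 1) →
    ∃ w : Finset A → ℝ, (∀ e ∈ E, 0 ≤ w e ∧ w e ≤ 1) ∧
      ∀ v ∈ V, ∑ e ∈ E.filter (fun e' => v ∈ e'), w e = b v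

/-- A switcher: an edge `e` with a central vertex `a` such that for every `b ∈ e`
there is `c ∉ e` with `(e ∪ {c}) \ {a}` and `(e ∪ {c}) \ {b}` both edges. -/
def HasSwitcher (C : Finset (Finset A)) : Prop :=
  ∃ e ∈ C, ∃ a ∈ e, ∀ b ∈ e, ∃ c, c ∉ e ∧
    insert c (e.erase a) ∈ C ∧ insert c (e.erase b) ∈ C

/-- An arc for the `d`-vicinity `C` of the `k`-graph with edge set `E`: a tuple of
`k+1` distinct vertices `v₁, …, v_{k+1}` with `{v₁,…,v_d} ∈ ∂_d`,
`{v_{d+1},…,v_k} ∈ C {v₁,…,v_d}`, `{v₂,…,v_{d+1}} ∈ ∂_d` and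
`{v_{d+2},…,v_{k+1}} ∈ C {v₂,…,v_{d+1}}`. -/
def HasArc (k d : ℕ) (E : Finset (Finset A)) (C : Finset A → Finset (Finset A)) : Prop :=
  ∃ l : List A, l.length = k + 1 ∧ l.Nodup ∧
    (l.take d).toFinset ∈ shadow d E ∧
    ((l.drop d).take (k - d)).toFinset ∈ C ((l.take d).toFinset) ∧
    ((l.drop 1).take d).toFinset ∈ shadow d E ∧
    (l.drop (d + 1)).toFinset ∈ C (((l.drop 1).take d).toFinset)

/-- The `k`-graph generated by a `d`-vicinity: all sets `B ∪ S` with `S ∈ ∂_d(E)`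
and `B ∈ C S`. -/
def generatedEdges (d : ℕ) (E : Finset (Finset A)) (C : Finset A → Finset (Finset A)) :
    Finset (Finset A) :=
  (shadow d E).biUnion fun S => (C S).image fun B => B ∪ S

/-- `α`-perturbed minimum relative `d`-degree at least `δ` for a `k`-graph on vertex
set `V` with edge set `E`. -/
def PerturbedDegLB (k d : ℕ) (a δ : ℝ) (V : Finset A) (E : Finset (Finset A)) : Prop :=
  ∀ j : ℕ, 1 ≤ j → j ≤ d →
    (∀ S ∈ shadow j E,
      δ * (((V.card - j).choose (k - j) : ℕ) : ℝ) ≤ ((E.filter fun e => S ⊆ e).card : ℝ)) ∧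
    ((((V.powersetCard j).filter fun S => S ∉ shadow j E).card : ℝ)
        ≤ a * ((V.card.choose j : ℕ) : ℝ)) ∧
    (∀ T : Finset A, (T ∈ shadow (j - 1) E ∨ (j = 1 ∧ T = ∅)) →
      ((((V.powersetCard j).filter fun S => T ⊆ S ∧ S ∉ shadow j E).card : ℝ)
        < a * ((V.card : ℝ) - (j : ℝ) + 1)))

/-- A `(γ, δ)`-Hamilton `d`-vicinity of a `k`-graph on `t = V.card` vertices. -/
def IsHamVicinity (k d : ℕ) (γ δ : ℝ) (V : Finset A) (E : Finset (Finset A))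
    (C : Finset A → Finset (Finset A)) : Prop :=
  (∀ S ∈ shadow d E, C S ⊆ link S E) ∧
  (∀ S ∈ shadow d E, TightlyConnected (k - d) (C S)) ∧
  (∀ S ∈ shadow d E, ∀ S' ∈ shadow d E, (C S ∩ C S').Nonempty) ∧
  (∀ S ∈ shadow d E, HasSwitcher (C S)) ∧
  HasArc k d E C ∧
  (∀ S ∈ shadow d E, HasFracMatching (C S) ((1 / (k : ℝ) + γ) * (V.card : ℝ))) ∧
  (∀ S ∈ shadow d E, (1 - δ + γ) * ((V.card.choose (k - d) : ℕ) : ℝ) ≤ ((C S).card : ℝ))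

/-- An `(a, γ, δ)`-Hamilton framework: a subgraph on vertex set `VH` with edge set `EH`
of a `k`-graph on vertex set `VR`, satisfying (F1)–(F5). -/
def IsHamFramework (k : ℕ) (a γ δ : ℝ) (VR VH : Finset A) (EH : Finset (Finset A)) : Prop :=
  (1 - a) * (VR.card : ℝ) ≤ (VH.card : ℝ) ∧
  TightlyConnected k EH ∧
  (∃ w : List A, IsClosedTightWalk k EH w ∧ w.length % k = 1 % k) ∧
  RobustlyMatchable γ VH EH ∧
  (∀ v ∈ VH, (1 - δ + γ) * (((VH.card - 1).choose (k - 1) : ℕ) : ℝ)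
      ≤ ((EH.filter fun e => v ∈ e).card : ℝ))

/-- A tight component: an edge-maximal tightly connected subgraph. -/
def IsTightComponent (k : ℕ) (E C : Finset (Finset A)) : Prop :=
  C ⊆ E ∧ TightlyConnected k C ∧
    ∀ C' : Finset (Finset A), C ⊆ C' → C' ⊆ E → TightlyConnected k C' → C' = C

/-- `δ` has the `(k,d)`-Hamilton-cycle property. -/
def HamCycleProp (k d : ℕ) (δ : ℝ) : Prop :=
  ∀ μ : ℝ, 0 < μ → ∃ n₀ : ℕ, ∀ (B : Type) [DecidableEq B],
    ∀ (V : Finset B) (E : Finset (Finset B)),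
      n₀ ≤ V.card → (∀ e ∈ E, e ⊆ V ∧ e.card = k) →
      (∀ S ⊆ V, S.card = d →
        (δ + μ) * (((V.card - d).choose (k - d) : ℕ) : ℝ)
          ≤ ((E.filter fun e => S ⊆ e).card : ℝ)) →
      HasTightHamCycle k V E

/-- `δ` has the `(k,d)`-Hamilton-framework property. -/
def HamFrameworkProp (k d : ℕ) (δ : ℝ) : Prop :=
  ∀ μ : ℝ, 0 < μ → ∃ γ₀ : ℝ, 0 < γ₀ ∧ ∀ γ : ℝ, 0 < γ → γ ≤ γ₀ →
    ∃ α₀ : ℝ, 0 < α₀ ∧ ∀ a : ℝ, 0 < a → a ≤ α₀ →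
      ∃ ε₀ : ℝ, 0 < ε₀ ∧ ∀ ε : ℝ, 0 < ε → ε ≤ ε₀ →
        ∃ t₀ : ℕ, ∀ t : ℕ, t₀ ≤ t →
          ∀ (B : Type) [DecidableEq B], ∀ (VR : Finset B) (ER : Finset (Finset B)),
            VR.card = t → (∀ e ∈ ER, e ⊆ VR ∧ e.card = k) →
            (∀ S ⊆ VR, S.card = d →
              (δ + μ) * (((t - d).choose (k - d) : ℕ) : ℝ)
                ≤ ((ER.filter fun e => S ⊆ e).card : ℝ)) →
            ∀ I : Finset (Finset B), I ⊆ ER → (I.card : ℝ) ≤ ε * ((t.choose k : ℕ) : ℝ) →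
              ∃ (VH : Finset B) (EH : Finset (Finset B)),
                VH ⊆ VR ∧ EH ⊆ ER ∧ (∀ e ∈ EH, e ⊆ VH) ∧ (∀ e ∈ EH, e ∉ I) ∧
                IsHamFramework k a γ δ VR VH EH

/-- `δ` has the `(k,d)`-Hamilton-vicinity property. -/
def HamVicinityProp (k d : ℕ) (δ : ℝ) : Prop :=
  ∀ μ : ℝ, 0 < μ → ∃ γ₀ : ℝ, 0 < γ₀ ∧ ∀ γ : ℝ, 0 < γ → γ ≤ γ₀ →
    ∃ α₀ : ℝ, 0 < α₀ ∧ ∀ a : ℝ, 0 < a → a ≤ α₀ →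
      ∃ t₀ : ℕ, ∀ t : ℕ, t₀ ≤ t →
        ∀ (B : Type) [DecidableEq B], ∀ (V : Finset B) (E : Finset (Finset B)),
          V.card = t → (∀ e ∈ E, e ⊆ V ∧ e.card = k) →
          PerturbedDegLB k d a (δ + μ) V E →
          (∀ v ∈ V, ∃ e ∈ E, v ∈ e) →
          ∃ C : Finset B → Finset (Finset B), IsHamVicinity k d γ δ V E C

namespace Nat

theorem choose_le_pow_mul_choose {r s t : ℕ} {x : ℝ} (hx : 0 ≤ x)
    (hs : (s : ℝ) ≤ x * (t + 1 - r : ℕ)) : (s.choose r : ℝ) ≤ x ^ r * t.choose r := by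
  have hr : (0 : ℝ) < r ! := mod_cast r.factorial_pos
  calc (s.choose r : ℝ) ≤ (s : ℝ) ^ r / r ! := choose_le_pow_div r s
    _ ≤ (x * (t + 1 - r : ℕ)) ^ r / r ! := by gcongr
    _ = x ^ r * (((t + 1 - r : ℕ) : ℝ) ^ r / r !) := by ring
    _ ≤ x ^ r * t.choose r := by gcongr; exact pow_le_choose r t

theorem pow_mul_choose_le_choose {r s t : ℕ} {x : ℝ} (hx : 0 ≤ x)
    (hs : x * t ≤ (s + 1 - r : ℕ)) : x ^ r * t.choose r ≤ s.choose r := by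
  calc x ^ r * t.choose r ≤ x ^ r * ((t : ℝ) ^ r / r !) := by
        gcongr; exact choose_le_pow_div r t
    _ = (x * t) ^ r / r ! := by ring
    _ ≤ ((s + 1 - r : ℕ) : ℝ) ^ r / r ! := by gcongr
    _ ≤ s.choose r := pow_le_choose r s

theorem choose_mul_eq_choose_sub_one_mul {t m : ℕ} (hm : 1 ≤ m) :
    t.choose m * m = t.choose (m - 1) * (t + 1 - m) := by
  have := choose_succ_right_eq t (m - 1)
  rwa [Nat.sub_add_cancel hm, show t - (m - 1) = t + 1 - m by omega] at this

end Nat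

open scoped FinsetFamily

namespace Finset

variable {α β : Type*} [DecidableEq α] [DecidableEq β]

theorem shadow_map (f : α ↪ β) (𝒜 : Finset (Finset α)) :
    ∂ (𝒜.map (mapEmbedding f).toEmbedding) = (∂ 𝒜).map (mapEmbedding f).toEmbedding := by
  ext s
  simp only [mem_shadow_iff, mem_map, RelEmbedding.coe_toEmbedding, mapEmbedding_apply]
  constructor
  · rintro ⟨_, ⟨u, hu, rfl⟩, a, ha, rfl⟩
    obtain ⟨b, hb, rfl⟩ := mem_map.1 ha
    exact ⟨u.erase b, ⟨u, hu, b, hb, rfl⟩, map_erase f u b⟩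
  · rintro ⟨_, ⟨u, hu, b, hb, rfl⟩, rfl⟩
    exact ⟨u.map f, ⟨u, hu, rfl⟩, f b, mem_map_of_mem f hb, (map_erase f u b).symm⟩

theorem shadow_subset_powersetCard {V : Finset α} {𝒜 : Finset (Finset α)} {r : ℕ}
    (h𝒜 : 𝒜 ⊆ V.powersetCard r) : ∂ 𝒜 ⊆ V.powersetCard (r - 1) := by
  intro s hs
  obtain ⟨u, hu, a, ha, rfl⟩ := mem_shadow_iff.1 hs
  obtain ⟨huV, hur⟩ := mem_powersetCard.1 (h𝒜 hu)
  exact mem_powersetCard.2 ⟨(erase_subset a u).trans huV, by rw [card_erase_of_mem ha, hur]⟩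

theorem kruskal_katona_lovasz_form_of_subset {V : Finset α} {𝒜 : Finset (Finset α)} {i r s : ℕ}
    (hir : i ≤ r) (hrs : r ≤ s) (hsV : s ≤ #V) (h𝒜 : 𝒜 ⊆ V.powersetCard r)
    (hcard : s.choose r ≤ #𝒜) : s.choose (r - i) ≤ #(∂^[i] 𝒜) := by
  set g : Fin #V ↪ α := V.equivFin.symm.toEmbedding.trans (Function.Embedding.subtype _)
  have hV : univ.map g = V := by
    rw [← map_map, map_univ_equiv, univ_eq_attach, attach_map_val]
  rw [← hV, powersetCard_map, subset_map_iff] at h𝒜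
  obtain ⟨𝒜', h𝒜', rfl⟩ := h𝒜
  rw [card_map] at hcard
  rw [← (Function.Semiconj.iterate_right (fun ℬ => (shadow_map g ℬ).symm) i) 𝒜', card_map]
  exact kruskal_katona_lovasz_form hir hrs (by simpa using hsV)
    ((Set.sized_powersetCard _ _).mono (by exact_mod_cast h𝒜')) hcard

theorem pow_mul_choose_le_card_shadow {V : Finset α} {𝒜 : Finset (Finset α)} {m : ℕ}
    {θ₁ θ₂ : ℝ} (h𝒜 : 𝒜 ⊆ V.powersetCard m) (hm : 1 ≤ m) (hθ₁ : 0 ≤ θ₁) (hθ₂ : θ₂ ≤ 1)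
    (hgap : (⌈θ₁ * #V⌉₊ + m : ℝ) ≤ θ₂ * (#V + 1 - m : ℕ))
    (hcard : θ₂ ^ m * (#V).choose m ≤ #𝒜) :
    θ₁ ^ (m - 1) * (#V).choose (m - 1) ≤ #(∂ 𝒜) := by
  set s := ⌈θ₁ * #V⌉₊ + m
  have hs : (s : ℝ) ≤ θ₂ * (#V + 1 - m : ℕ) := mod_cast hgap
  have hθ₂' : 0 ≤ θ₂ := by
    refine (pos_of_mul_pos_left (lt_of_lt_of_le ?_ hs) (Nat.cast_nonneg _)).le
    exact_mod_cast (show 0 < s by omega)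
  have hsV : s ≤ #V := by
    have : (s : ℝ) ≤ (#V + 1 - m : ℕ) := hs.trans (mul_le_of_le_one_left (Nat.cast_nonneg _) hθ₂)
    have : s ≤ #V + 1 - m := mod_cast this
    omega
  have hKK := kruskal_katona_lovasz_form_of_subset (i := 1) hm (Nat.le_add_left m _) hsV h𝒜
    (mod_cast (Nat.choose_le_pow_mul_choose hθ₂' hs).trans hcard)
  have hθ₁s : θ₁ * #V ≤ (s + 1 - (m - 1) : ℕ) := by
    rw [show s + 1 - (m - 1) = ⌈θ₁ * #V⌉₊ + 2 by omega]
    push_cast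
    linarith [Nat.le_ceil (θ₁ * #V)]
  calc θ₁ ^ (m - 1) * (#V).choose (m - 1) ≤ s.choose (m - 1) :=
        Nat.pow_mul_choose_le_choose hθ₁ hθ₁s
    _ ≤ #(∂ 𝒜) := mod_cast hKK

end Finset

theorem le_one_of_mul_choose_le_card {α : Type*} {V : Finset α} {F : Finset (Finset α)} {m : ℕ}
    {δ : ℝ} (hF : F ⊆ V.powersetCard m) (hmV : m ≤ #V)
    (hδ : δ * (#V).choose m ≤ #F) : δ ≤ 1 := by
  have hM : (0 : ℝ) < (#V).choose m := mod_cast Nat.choose_pos hmV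
  have hFM : (#F : ℝ) ≤ (#V).choose m := by
    simpa using (mod_cast card_le_card hF : (#F : ℝ) ≤ #(V.powersetCard m))
  nlinarith

section Vicinity

variable {V S Z : Finset A} {E F : Finset (Finset A)} {d k m : ℕ} {δ : ℝ}

theorem mem_shadow_iff_exists : S ∈ shadow d E ↔ ∃ e ∈ E, S ⊆ e ∧ #S = d := by
  simp only [_root_.shadow, mem_biUnion, mem_powersetCard]

theorem card_of_mem_shadow (hS : S ∈ shadow d E) : #S = d := by
  obtain ⟨-, -, -, h⟩ := mem_shadow_iff_exists.1 hS
  exact h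

theorem mem_link_iff : Z ∈ link S E ↔ Disjoint Z S ∧ S ∪ Z ∈ E := by
  simp only [link, mem_image, mem_filter]
  constructor
  · rintro ⟨e, ⟨he, hSe⟩, rfl⟩
    exact ⟨sdiff_disjoint, by rwa [union_sdiff_of_subset hSe]⟩
  · rintro ⟨hZS, hE⟩
    exact ⟨S ∪ Z, ⟨hE, subset_union_left⟩, by rw [union_sdiff_cancel_left hZS.symm]⟩

theorem mem_link_singleton_iff {v : A} : Z ∈ link {v} F ↔ v ∉ Z ∧ insert v Z ∈ F := by
  rw [mem_link_iff, disjoint_singleton_right, singleton_union]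

theorem card_link (S : Finset A) (F : Finset (Finset A)) :
    #(link S F) = #(F.filter (S ⊆ ·)) := by
  refine card_image_of_injOn fun e he e' he' h => ?_
  rw [← union_sdiff_of_subset (mem_filter.1 he).2, ← union_sdiff_of_subset (mem_filter.1 he').2]
  exact congrArg (S ∪ ·) h

theorem link_subset_powersetCard (hE : E ⊆ V.powersetCard k) :
    link S E ⊆ V.powersetCard (k - #S) := by
  intro Z hZ
  obtain ⟨hZS, hSZ⟩ := mem_link_iff.1 hZ
  obtain ⟨hV, hk⟩ := mem_powersetCard.1 (hE hSZ)
  refine mem_powersetCard.2 ⟨subset_union_right.trans hV, ?_⟩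
  rw [card_union_of_disjoint hZS.symm] at hk
  omega

theorem insert_erase_mem_shadow {v v₁ : A} (hS : S ∈ shadow d E) (hZ : Z ∈ link S E)
    (hv : v ∈ Z) (hv₁ : v₁ ∈ S) : insert v (S.erase v₁) ∈ shadow d E := by
  obtain ⟨hZS, hSZ⟩ := mem_link_iff.1 hZ
  have hvS : v ∉ S.erase v₁ := fun h => disjoint_left.1 hZS hv (mem_of_mem_erase h)
  refine mem_shadow_iff_exists.2 ⟨S ∪ Z, hSZ, ?_, ?_⟩
  · exact insert_subset (mem_union_right S hv) ((erase_subset v₁ S).trans subset_union_left)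
  · rw [card_insert_of_notMem hvS, card_erase_of_mem hv₁, card_of_mem_shadow hS]
    have := card_pos.2 ⟨v₁, hv₁⟩
    rw [card_of_mem_shadow hS] at this
    omega

theorem exists_mul_card_le_mul_card_link (hF : F ⊆ V.powersetCard m) (hV : V.Nonempty) :
    ∃ v ∈ V, m * #F ≤ #V * #(link {v} F) := by
  have hsum : ∑ v ∈ V, #(link {v} F) = ∑ Z ∈ F, #(V ∩ Z) := by
    simp_rw [card_link, singleton_subset_iff, ← filter_mem_eq_inter, card_eq_sum_ones, sum_filter]
    exact sum_comm
  have hcard : ∀ Z ∈ F, #(V ∩ Z) = m := fun Z hZ => by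
    obtain ⟨hZV, hZ⟩ := mem_powersetCard.1 (hF hZ)
    rw [inter_eq_right.2 hZV, hZ]
  obtain ⟨v, hv, h⟩ := exists_le_of_sum_le hV (f := fun _ => m * #F)
    (g := fun v => #V * #(link {v} F))
    (le_of_eq (by
      rw [sum_const, ← mul_sum, hsum, sum_congr rfl hcard, sum_const, smul_eq_mul, smul_eq_mul]
      ring))
  exact ⟨v, hv, h⟩

theorem card_le_card_filter_notMem_add (hF : F ⊆ V.powersetCard m) (v : A) :
    #F ≤ #(F.filter (v ∉ ·)) + (#V).choose (m - 1) := by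
  have hlink : #(link {v} F) ≤ (#V).choose (m - 1) := by
    simpa using card_le_card (link_subset_powersetCard hF (S := {v}))
  rw [card_link] at hlink
  simp only [singleton_subset_iff] at hlink
  have := card_filter_add_card_filter_not (s := F) (v ∈ ·)
  omega

theorem exists_mul_choose_le_mul_card_link (hF : F ⊆ V.powersetCard m) (hm : 1 ≤ m)
    (hV : V.Nonempty) (hδ : δ * (#V).choose m ≤ #F) :
    ∃ v, δ * (#V + 1 - m : ℕ) * (#V).choose (m - 1) ≤ #V * #(link {v} F) := by
  obtain ⟨v, -, hv⟩ := exists_mul_card_le_mul_card_link hF hV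
  have hid : ((#V).choose m : ℝ) * m = (#V).choose (m - 1) * (#V + 1 - m : ℕ) :=
    mod_cast Nat.choose_mul_eq_choose_sub_one_mul hm
  refine ⟨v, ?_⟩
  calc δ * (#V + 1 - m : ℕ) * (#V).choose (m - 1) = m * (δ * (#V).choose m) := by
        linear_combination -δ * hid
    _ ≤ m * #F := by gcongr
    _ ≤ #V * #(link {v} F) := mod_cast hv

theorem pow_mul_choose_le_card_filter_notMem {θ : ℝ} (hF : F ⊆ V.powersetCard m) (hm : 1 ≤ m)
    (hmV : m ≤ #V) (hδ : δ * (#V).choose m ≤ #F) (hgap : m ≤ (δ - θ ^ m) * (#V + 1 - m : ℕ))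
    (v : A) : θ ^ m * (#V).choose m ≤ #(F.filter (v ∉ ·)) := by
  have hid : ((#V).choose m : ℝ) * m = (#V).choose (m - 1) * (#V + 1 - m : ℕ) :=
    mod_cast Nat.choose_mul_eq_choose_sub_one_mul hm
  have hu : (0 : ℝ) < (#V + 1 - m : ℕ) := mod_cast (by omega : 0 < #V + 1 - m)
  have hM : (0 : ℝ) ≤ (#V).choose m := Nat.cast_nonneg _
  have hN : ((#V).choose (m - 1) : ℝ) ≤ (δ - θ ^ m) * (#V).choose m := by
    refine le_of_mul_le_mul_right ?_ hu
    nlinarith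
  have hF' : (#F : ℝ) ≤ #(F.filter (v ∉ ·)) + (#V).choose (m - 1) :=
    mod_cast card_le_card_filter_notMem_add hF v
  linarith

end Vicinity

section Arc

variable {S Y : Finset A} {E : Finset (Finset A)} {C : Finset A → Finset (Finset A)} {d k : ℕ}
  {v₁ v w : A}

theorem hasArc_of_insert_mem_of_insert_mem (hS : S ∈ shadow d E) (hv₁ : v₁ ∈ S)
    (hS' : insert v (S.erase v₁) ∈ shadow d E) (hY : #Y + 1 = k - d) (hvY : v ∉ Y) (hwY : w ∉ Y)
    (hZS : Disjoint (insert v Y) S) (hWS : Disjoint (insert w Y) (insert v (S.erase v₁)))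
    (hwv₁ : w ≠ v₁) (hZ : insert v Y ∈ C S) (hW : insert w Y ∈ C (insert v (S.erase v₁))) :
    HasArc k d E C := by
  simp only [disjoint_insert_left, disjoint_insert_right, mem_insert, mem_erase, not_or] at hZS hWS
  set l := v₁ :: ((S.erase v₁).toList ++ v :: (Y.toList ++ [w]))
  have hl : l.Nodup := by
    simp only [l, List.nodup_cons, List.nodup_append, List.mem_append, List.mem_cons, mem_toList,
      nodup_toList]
    grind [disjoint_left]
  have hSd := card_of_mem_shadow hS
  have hd : d = (S.erase v₁).toList.length + 1 := by
    rw [length_toList, card_erase_of_mem hv₁, hSd]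
    have := hSd ▸ card_pos.2 ⟨v₁, hv₁⟩
    omega
  have hkd : k - d = Y.toList.length + 1 := by rw [length_toList, hY]
  have h₁ : (l.take d).toFinset = S := by
    subst hd; simp [l, insert_erase hv₁]
  have h₂ : ((l.drop d).take (k - d)).toFinset = insert v Y := by
    rw [hkd]; subst hd; simp [l]
  have h₃ : ((l.drop 1).take d).toFinset = insert v (S.erase v₁) := by
    subst hd; simp [l, List.take_append, List.take_of_length_le, -length_toList]
  have h₄ : (l.drop (d + 1)).toFinset = insert w Y := by
    subst hd; simp [l, -length_toList]
  refine ⟨l, ?_, hl, h₁ ▸ hS, h₁ ▸ h₂ ▸ hZ, h₃ ▸ hS', h₃ ▸ h₄ ▸ hW⟩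
  simp only [l, List.length_cons, List.length_append, List.length_nil]
  omega

end Arc

theorem hasArc_of_inter_nonempty {V S : Finset A} {E : Finset (Finset A)}
    {C : Finset A → Finset (Finset A)} {d k : ℕ} {v₁ v : A} (hE : E ⊆ V.powersetCard k)
    (hC : ∀ S ∈ shadow d E, C S ⊆ link S E) (hS : S ∈ shadow d E) (hv₁ : v₁ ∈ S)
    (hS' : insert v (S.erase v₁) ∈ shadow d E)
    (h : (link {v} (C S) ∩ ∂ ((C (insert v (S.erase v₁))).filter (v₁ ∉ ·))).Nonempty) :
    HasArc k d E C := by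
  obtain ⟨Y, hY⟩ := h
  rw [mem_inter, mem_link_singleton_iff, mem_shadow_iff_insert_mem] at hY
  obtain ⟨⟨hvY, hZ⟩, w, hwY, hW⟩ := hY
  rw [mem_filter] at hW
  have hcard := (mem_powersetCard.1 (link_subset_powersetCard hE (hC S hS hZ))).2
  rw [card_insert_of_notMem hvY, card_of_mem_shadow hS] at hcard
  exact hasArc_of_insert_mem_of_insert_mem hS hv₁ hS' hcard hvY hwY (mem_link_iff.1 (hC S hS hZ)).1
    (mem_link_iff.1 (hC _ hS' hW.1)).1 (fun h => hW.2 (h ▸ mem_insert_self w Y)) hZ hW.1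

/-- `t` is large enough to absorb the error terms of the counting: `s = ⌈θ₁ t⌉₊ + m` lies between
`θ₁ t` and `θ₂ (t + 1 - m)`, the `C(t, m-1)` sets through one vertex cost less than `δ - θ₂ ^ m` of
the density, and the two `(m-1)`-families that must meet have total size above `C(t, m-1)`. -/
structure IsArcScale (m : ℕ) (δ θ₁ θ₂ : ℝ) (t : ℕ) : Prop where
  ceil_add_le : (⌈θ₁ * t⌉₊ + m : ℝ) ≤ θ₂ * (t + 1 - m : ℕ)
  le_mul : (m : ℝ) ≤ (δ - θ₂ ^ m) * (t + 1 - m : ℕ)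
  lt_add : (t : ℝ) < δ * (t + 1 - m : ℕ) + θ₁ ^ (m - 1) * t

theorem hasArc_of_isArcScale {V : Finset A} {E : Finset (Finset A)}
    {C : Finset A → Finset (Finset A)} {d k : ℕ} {δ θ₁ θ₂ : ℝ} (hd : 1 ≤ d) (hdk : d < k)
    (hE : E ⊆ V.powersetCard k) (hEne : E.Nonempty) (hC : ∀ S ∈ shadow d E, C S ⊆ link S E)
    (hCcard : ∀ S ∈ shadow d E, δ * (#V).choose (k - d) ≤ #(C S))
    (hδ : 0 < δ) (hθ₁ : 0 ≤ θ₁) (hθ₂ : θ₂ ^ (k - d) < δ) (ht : IsArcScale (k - d) δ θ₁ θ₂ #V) :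
    HasArc k d E C := by
  set m := k - d
  have hm : 1 ≤ m := by omega
  obtain ⟨e, he⟩ := hEne
  obtain ⟨heV, hek⟩ := mem_powersetCard.1 (hE he)
  have hkV : k ≤ #V := hek ▸ card_le_card heV
  obtain ⟨S, hSe, hSd⟩ := exists_subset_card_eq (hek ▸ hdk.le : d ≤ #e)
  have hS : S ∈ shadow d E := mem_shadow_iff_exists.2 ⟨e, he, hSe, hSd⟩
  have hCV : ∀ S ∈ shadow d E, C S ⊆ V.powersetCard m := fun S hS => by
    simpa [card_of_mem_shadow hS] using (hC S hS).trans (link_subset_powersetCard hE)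
  have hθ₂₁ : θ₂ ≤ 1 := by
    by_contra! h
    have := le_one_of_mul_choose_le_card (hCV S hS) (by omega) (hCcard S hS)
    linarith [one_lt_pow₀ h (by omega : m ≠ 0)]
  obtain ⟨v, hv⟩ := exists_mul_choose_le_mul_card_link (hCV S hS) hm (card_pos.1 (by omega))
    (hCcard S hS)
  have hN : (0 : ℝ) < (#V).choose (m - 1) := mod_cast Nat.choose_pos (by omega)
  obtain ⟨Y, hY⟩ : (link {v} (C S)).Nonempty := by
    have hu : (0 : ℝ) < (#V + 1 - m : ℕ) := mod_cast (by omega : 0 < #V + 1 - m)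
    rw [← card_pos, ← Nat.cast_pos (α := ℝ)]
    exact pos_of_mul_pos_right ((by positivity : (0 : ℝ) < _).trans_le hv) (Nat.cast_nonneg _)
  obtain ⟨v₁, hv₁⟩ : S.Nonempty := card_pos.1 (by omega)
  have hS' : insert v (S.erase v₁) ∈ shadow d E :=
    insert_erase_mem_shadow hS (hC S hS (mem_link_singleton_iff.1 hY).2) (mem_insert_self v Y) hv₁
  have hC'V := (filter_subset (v₁ ∉ ·) _).trans (hCV _ hS')
  have hshadow := pow_mul_choose_le_card_shadow hC'V hm hθ₁ hθ₂₁ ht.ceil_add_le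
    (pow_mul_choose_le_card_filter_notMem (hCV _ hS') hm (by omega) (hCcard _ hS') ht.le_mul v₁)
  refine hasArc_of_inter_nonempty hE hC hS hv₁ hS' (inter_nonempty_of_card_lt_card_add_card
    (link_subset_powersetCard (hCV S hS)) (shadow_subset_powersetCard hC'V) ?_)
  rw [card_powersetCard, card_singleton, ← Nat.cast_lt (α := ℝ), Nat.cast_add]
  have hV : (0 : ℝ) < #V := mod_cast (by omega : 0 < #V)
  refine lt_of_mul_lt_mul_left ?_ hV.le
  linarith [mul_lt_mul_of_pos_right ht.lt_add hN, mul_le_mul_of_nonneg_left hshadow hV.le]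

open Filter Topology

theorem exists_arcScale_params {δ : ℝ} {m : ℕ} (hδ : 0 < δ) (hm : 1 ≤ m)
    (h : 1 < δ + δ ^ (1 - 1 / (m : ℝ))) :
    ∃ θ₁ θ₂ : ℝ, 0 ≤ θ₁ ∧ θ₁ < θ₂ ∧ θ₂ ^ m < δ ∧ 1 < δ + θ₁ ^ (m - 1) := by
  set θ := δ ^ ((m : ℝ)⁻¹)
  have hθ : 0 < θ := Real.rpow_pos_of_pos hδ _
  have hθm : θ ^ m = δ := Real.rpow_inv_natCast_pow hδ.le (by omega)
  have hθm₁ : θ ^ (m - 1) = δ ^ (1 - 1 / (m : ℝ)) := by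
    rw [← Real.rpow_natCast, ← Real.rpow_mul hδ.le, Nat.cast_sub hm, Nat.cast_one]
    congr 1
    field_simp
  have hc : Continuous fun x : ℝ => δ + x ^ (m - 1) := by fun_prop
  have hev : ∀ᶠ x in 𝓝[<] θ, 0 < x ∧ 1 < δ + x ^ (m - 1) :=
    nhdsWithin_le_nhds <| (eventually_gt_nhds hθ).and <|
      (hc.tendsto θ).eventually (eventually_gt_nhds (by rwa [hθm₁]))
  obtain ⟨x, ⟨hx, hxδ⟩, hxθ⟩ := (hev.and self_mem_nhdsWithin).exists
  refine ⟨x, (x + θ) / 2, hx.le, by linarith, ?_, hxδ⟩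
  calc ((x + θ) / 2) ^ m < θ ^ m :=
        pow_lt_pow_left₀ (by linarith) (by positivity) (by omega)
    _ = δ := hθm

theorem eventually_isArcScale {m : ℕ} {δ θ₁ θ₂ : ℝ} (hθ₁ : 0 ≤ θ₁) (hθ : θ₁ < θ₂)
    (hθ₂ : θ₂ ^ m < δ) (hδ : 1 < δ + θ₁ ^ (m - 1)) : ∀ᶠ t : ℕ in atTop, IsArcScale m δ θ₁ θ₂ t := by
  have hlinear {a : ℝ} (ha : 0 < a) (b : ℝ) : ∀ᶠ t : ℕ in atTop, b ≤ a * t :=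
    (tendsto_natCast_atTop_atTop.const_mul_atTop ha).eventually_ge_atTop b
  have hθ₂₀ : 0 ≤ θ₂ := hθ₁.trans hθ.le
  have hδ₀ : 0 < δ := (pow_nonneg hθ₂₀ m).trans_lt hθ₂
  filter_upwards [hlinear (sub_pos.2 hθ) (1 + m + θ₂ * m),
    hlinear (sub_pos.2 hθ₂) (m + (δ - θ₂ ^ m) * m),
    hlinear (by linarith : 0 < δ + θ₁ ^ (m - 1) - 1) (δ * m + 1),
    eventually_ge_atTop m] with t h₁ h₂ h₃ hmt
  have hu : ((t + 1 - m : ℕ) : ℝ) = t + 1 - m := by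
    rw [Nat.cast_sub (by omega)]
    push_cast
    ring
  refine ⟨?_, ?_, ?_⟩ <;> rw [hu]
  · linarith [Nat.ceil_lt_add_one (mul_nonneg hθ₁ (Nat.cast_nonneg t))]
  · linarith
  · linarith

/-- existence of arcs. -/
theorem arc_existence (k d : ℕ) (hd : 1 ≤ d) (hdk : d ≤ k - 1) (δ ε : ℝ)
    (hδ : 0 < δ) (hε : 0 < ε)
    (hcond : 1 + ε < δ + δ ^ ((1 : ℝ) - 1 / ((k : ℝ) - (d : ℝ)))) :
    ∃ t₀ : ℕ, ∀ t : ℕ, t₀ ≤ t →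
      ∀ (B : Type) [DecidableEq B], ∀ (V : Finset B) (E : Finset (Finset B)),
        V.card = t → (∀ e ∈ E, e ⊆ V ∧ e.card = k) → E.Nonempty →
        ∀ C : Finset B → Finset (Finset B),
          (∀ S ∈ shadow d E, C S ⊆ link S E) →
          (∀ S ∈ shadow d E, δ * ((t.choose (k - d) : ℕ) : ℝ) ≤ ((C S).card : ℝ)) →
          HasArc k d E C := by
  have hkd : (k : ℝ) - d = (k - d : ℕ) := by rw [Nat.cast_sub (by omega)]
  rw [hkd] at hcond
  obtain ⟨θ₁, θ₂, hθ₁, hθ, hθ₂, hθ₁δ⟩ :=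
    exists_arcScale_params (m := k - d) hδ (by omega) (by linarith)
  obtain ⟨t₀, ht₀⟩ := eventually_atTop.1 (eventually_isArcScale hθ₁ hθ hθ₂ hθ₁δ)
  refine ⟨t₀, fun t ht B _ V E hV hE hEne C hC hCcard => ?_⟩
  subst hV
  exact hasArc_of_isArcScale hd (by omega) (fun e he => mem_powersetCard.2 (hE e he)) hEne hC
    hCcard hδ hθ₁ hθ₂ (ht₀ _ ht)
end

section
/- (Structure of dense graphs above density 5/9.) For every μ > 0 there exists γ_0 > 0 such that for every 0 < γ ≤ γ_0 there exists t_0 such that for all t ≥ t_0 the following holds. Let L_1 and L_2 be 2-graphs (graphs) on a common vertex set of size t, each with edge density at least 5/9 + μ, and for i = 1, 2 let C_i be a connected component of L_i with the maximum number of edges. Then: (i) C_1 and C_2 have an edge in common; (ii) each C_i contains a switcher; (iii) each C_i has a fractional matching of size at least (1/3 + γ)·t; (iv) each C_i has at least (4/9 + γ)·(t choose 2) edges. -/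
/-!
Let `C` be a largest component of a graph `E` of density `5/9 + ν` on `t` vertices, and `W` its
vertex set. No edge of `E` leaves a component, so `|E| ≤ |C| + binom(t - |W|, 2)`. The component
of a vertex of at least average degree spans `5t/9` vertices; this bound then forces it to span
`(2/3 + ν/2) t` vertices and to have `(4/9 + ν) binom(t, 2)` edges, hence so does `C`, and
`|W| ≥ (2/3 + ν/8) t`.

* In a graph a switcher is a triangle, and `4|C| > |W|²` yields one by Mantel's theorem.
* By Hall's theorem on the bipartite double cover, a deficiency `|J| - |N(J)| ≤ D` with
  `D ≈ |W| - (2/3 + ν/50) t` gives a fractional matching of size `(|W| - D)/2`. It suffices to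
  check independent sets `J`, and for those the pairs between `J` and `W \ N(J)` are all
  missing from `E`, which the density does not allow when `|J| - |N(J)| > D`.
* If `C₁ ∩ C₂ = ∅`, every pair inside `W₁ ∩ W₂` is missed by `C₁` or by `C₂`; as
  `|W₁ ∩ W₂| ≥ |W₁| + |W₂| - t`, this contradicts the edge counts of `C₁` and `C₂`.
-/

open Finset

variable {A : Type*} [DecidableEq A]

section TightWalks

variable {k : ℕ} {E C : Finset (Finset A)} {w : List A} {e f g : Finset A} {u v : A}

lemma walkEdgeAt_two_cons_cons (l : List A) : walkEdgeAt 2 (u :: v :: l) 0 = {u, v} := by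
  simp [walkEdgeAt]

lemma walkEdgeAt_drop (w : List A) (i j : ℕ) :
    walkEdgeAt k (w.drop j) i = walkEdgeAt k w (j + i) := by
  rw [walkEdgeAt, walkEdgeAt, List.drop_drop]

lemma walkEdgeAt_reverse {i : ℕ} (hi : i + k ≤ w.length) :
    walkEdgeAt k w.reverse (w.length - i - k) = walkEdgeAt k w i := by
  rw [walkEdgeAt, walkEdgeAt, List.drop_reverse, List.take_reverse, List.toFinset_reverse,
    List.drop_take]
  congr 3 <;> simp <;> omega

lemma IsTightWalk.mono (hw : IsTightWalk k E w) (h : E ⊆ C) : IsTightWalk k C w :=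
  ⟨hw.1, fun i hi => h (hw.2 i hi)⟩

lemma IsTightWalk.drop (hw : IsTightWalk k E w) {j : ℕ} (hj : j + k ≤ w.length) :
    IsTightWalk k E (w.drop j) := by
  refine ⟨by simp; omega, fun i hi => ?_⟩
  rw [walkEdgeAt_drop]
  exact hw.2 _ (by simp at hi; omega)

lemma IsTightWalk.reverse (hw : IsTightWalk k E w) : IsTightWalk k E w.reverse := by
  refine ⟨by simpa using hw.1, fun i hi => ?_⟩
  rw [List.length_reverse] at hi
  have h := walkEdgeAt_reverse (k := k) (w := w) (i := w.length - i - k) (by omega)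
  rw [show w.length - (w.length - i - k) - k = i by omega] at h
  exact h ▸ hw.2 _ (by omega)

lemma IsTightWalk.cons (hw : IsTightWalk k E w) (hv : walkEdgeAt k (v :: w) 0 ∈ E) :
    IsTightWalk k E (v :: w) := by
  refine ⟨hw.1.trans (by simp), fun i hi => ?_⟩
  cases i with
  | zero => exact hv
  | succ i => exact hw.2 i (by simp at hi; omega)

lemma EdgeOnWalk.cons (h : EdgeOnWalk k w e) : EdgeOnWalk k (v :: w) e := by
  obtain ⟨i, hi, rfl⟩ := h
  exact ⟨i + 1, by simp; omega, rfl⟩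

lemma TightlyConnected.exists_walk_le (hC : TightlyConnected k C) (hg : g ∈ C) (hf : f ∈ C) :
    ∃ w, IsTightWalk k C w ∧ ∃ i j, i ≤ j ∧ j + k ≤ w.length ∧
      walkEdgeAt k w i = g ∧ walkEdgeAt k w j = f := by
  obtain ⟨w, hw, ⟨i, hi, rfl⟩, ⟨j, hj, rfl⟩⟩ := hC g hg f hf
  rcases le_total i j with hij | hji
  · exact ⟨w, hw, i, j, hij, hj, rfl, rfl⟩
  · refine ⟨w.reverse, hw.reverse, w.length - i - k, w.length - j - k, by omega, by simp; omega,
      walkEdgeAt_reverse hi, walkEdgeAt_reverse hj⟩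

lemma TightlyConnected.exists_walk_cons (hC : TightlyConnected 2 C) (hg : g ∈ C) (hu : u ∈ g)
    (hf : f ∈ C) : ∃ w, IsTightWalk 2 C (u :: w) ∧ EdgeOnWalk 2 (u :: w) f := by
  obtain ⟨w, hw, i, j, hij, hj, rfl, rfl⟩ := hC.exists_walk_le hg hf
  have hdrop := hw.drop (j := i) (by omega)
  have hf' : EdgeOnWalk 2 (w.drop i) (walkEdgeAt 2 w j) :=
    ⟨j - i, by simp; omega, by rw [walkEdgeAt_drop, Nat.add_sub_cancel' hij]⟩
  rw [← Nat.add_zero i, ← walkEdgeAt_drop] at hu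
  obtain ⟨x, y, l, hl⟩ : ∃ x y l, w.drop i = x :: y :: l :=
    match w.drop i, hdrop.1 with
    | x :: y :: l, _ => ⟨x, y, l, rfl⟩
  rw [hl, walkEdgeAt_two_cons_cons] at hu
  rw [hl] at hdrop hf'
  rcases mem_insert.1 hu with rfl | hu
  · exact ⟨_, hdrop, hf'⟩
  · rw [mem_singleton.1 hu]
    refine ⟨x :: y :: l, hdrop.cons ?_, hf'.cons⟩
    rw [walkEdgeAt_two_cons_cons, pair_comm, ← walkEdgeAt_two_cons_cons l]
    exact hdrop.2 0 (by simp)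

lemma TightlyConnected.insert_pair (hC : TightlyConnected 2 C) (hg : g ∈ C) (hu : u ∈ g) :
    TightlyConnected 2 (insert {v, u} C) := by
  have key : ∀ f ∈ C, ∃ w, IsTightWalk 2 (insert {v, u} C) w ∧
      EdgeOnWalk 2 w {v, u} ∧ EdgeOnWalk 2 w f := by
    intro f hf
    obtain ⟨w, hw, hfw⟩ := hC.exists_walk_cons hg hu hf
    refine ⟨v :: u :: w, (hw.mono (subset_insert _ _)).cons ?_,
      ⟨0, by simp, walkEdgeAt_two_cons_cons w⟩, hfw.cons⟩
    rw [walkEdgeAt_two_cons_cons]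
    exact mem_insert_self _ _
  intro e₁ h₁ e₂ h₂
  rcases mem_insert.1 h₁ with rfl | h₁ <;> rcases mem_insert.1 h₂ with rfl | h₂
  · obtain ⟨w, hw, h, -⟩ := key g hg
    exact ⟨w, hw, h, h⟩
  · exact key e₂ h₂
  · obtain ⟨w, hw, h₁, h₂⟩ := key e₁ h₁
    exact ⟨w, hw, h₂, h₁⟩
  · obtain ⟨w, hw, hw₁, hw₂⟩ := hC e₁ h₁ e₂ h₂
    exact ⟨w, hw.mono (subset_insert _ _), hw₁, hw₂⟩

lemma tightlyConnected_singleton (he : e.card = k) : TightlyConnected k {e} := by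
  have hwalk : walkEdgeAt k e.toList 0 = e := by
    rw [walkEdgeAt, List.drop_zero, List.take_of_length_le (by simp [he]), toList_toFinset]
  have hlen : e.toList.length = k := by simp [he]
  intro e₁ h₁ e₂ h₂
  rw [mem_singleton] at h₁ h₂
  rw [h₁, h₂]
  refine ⟨e.toList, ⟨hlen.ge, fun i hi => ?_⟩, ⟨0, by omega, hwalk⟩, ⟨0, by omega, hwalk⟩⟩
  rw [show i = 0 by omega, hwalk]
  exact mem_singleton_self _

lemma exists_isTightComponent_mem (he : e ∈ E) (hek : e.card = k) :
    ∃ C, IsTightComponent k E C ∧ e ∈ C := by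
  classical
  obtain ⟨C, hC, hmax⟩ := exists_max_image
    (E.powerset.filter fun D => e ∈ D ∧ TightlyConnected k D) card
    ⟨{e}, by simpa [he] using tightlyConnected_singleton hek⟩
  simp only [mem_filter, mem_powerset] at hC hmax
  refine ⟨C, ⟨hC.1, hC.2.2, fun C' hCC' hC'E hC' => ?_⟩, hC.2.1⟩
  exact (eq_of_subset_of_card_le hCC' (hmax C' ⟨hC'E, hCC' hC.2.1, hC'⟩)).symm

end TightWalks

def verts (C : Finset (Finset A)) : Finset A := C.biUnion id

@[simp] lemma mem_verts {C : Finset (Finset A)} {x : A} : x ∈ verts C ↔ ∃ e ∈ C, x ∈ e := by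
  simp [verts]

section Graphs

variable {V : Finset A} {E C : Finset (Finset A)} {u v : A}

lemma exists_eq_pair_of_card_eq_two {e : Finset A} (he : e.card = 2) (hu : u ∈ e) :
    ∃ v, v ≠ u ∧ e = {u, v} := by
  obtain ⟨x, y, hxy, rfl⟩ := card_eq_two.1 he
  rcases mem_insert.1 hu with rfl | hy
  · exact ⟨y, hxy.symm, rfl⟩
  · rw [mem_singleton.1 hy]
    exact ⟨x, hxy, pair_comm _ _⟩

lemma IsTightComponent.mem_of_mem_verts (hC : IsTightComponent 2 E C) {e : Finset A}
    (he : e ∈ E) (he2 : e.card = 2) (hu : u ∈ verts C) (hue : u ∈ e) : e ∈ C := by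
  obtain ⟨v, -, rfl⟩ := exists_eq_pair_of_card_eq_two he2 hue
  obtain ⟨g, hg, hug⟩ := mem_verts.1 hu
  rw [pair_comm, ← hC.2.2 _ (subset_insert _ _)
    (insert_subset (pair_comm u v ▸ he) hC.1) (hC.2.1.insert_pair hg hug)]
  exact mem_insert_self _ _

lemma verts_subset (hE : ∀ e ∈ E, e ⊆ V) (hCE : C ⊆ E) : verts C ⊆ V := by
  intro x hx
  obtain ⟨e, he, hxe⟩ := mem_verts.1 hx
  exact hE e (hCE he) hxe

lemma subset_powersetCard_verts (hC2 : ∀ e ∈ C, e.card = 2) : C ⊆ (verts C).powersetCard 2 :=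
  fun e he => mem_powersetCard.2 ⟨fun _ hx => mem_verts.2 ⟨e, he, hx⟩, hC2 e he⟩

lemma card_le_choose_card_verts (hC2 : ∀ e ∈ C, e.card = 2) :
    C.card ≤ (verts C).card.choose 2 := by
  simpa using card_le_card (subset_powersetCard_verts hC2)

/-- An edge of `E` outside the component `C` avoids all vertices of `C`. -/
lemma IsTightComponent.card_le_card_add_choose (hE : ∀ e ∈ E, e ⊆ V ∧ e.card = 2)
    (hC : IsTightComponent 2 E C) : E.card ≤ C.card + (V \ verts C).card.choose 2 := by
  have hout : E \ C ⊆ (V \ verts C).powersetCard 2 := by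
    intro e he
    obtain ⟨heE, heC⟩ := mem_sdiff.1 he
    refine mem_powersetCard.2 ⟨fun x hx => mem_sdiff.2 ⟨(hE e heE).1 hx, fun hxC => ?_⟩,
      (hE e heE).2⟩
    exact heC (hC.mem_of_mem_verts heE (hE e heE).2 hxC hx)
  have := card_le_card hout
  rw [card_powersetCard] at this
  have := card_le_card_sdiff_add_card (s := E) (t := C)
  omega

lemma IsTightComponent.card_le_card_add_pairs {t : ℕ} (hE : ∀ e ∈ E, e ⊆ V ∧ e.card = 2)
    (hVt : V.card = t) (hC : IsTightComponent 2 E C) :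
    (E.card : ℝ) ≤
      C.card + ((t : ℝ) - (verts C).card) * ((t : ℝ) - (verts C).card - 1) / 2 := by
  have hWV := verts_subset (fun e he => (hE e he).1) hC.1
  have h := hC.card_le_card_add_choose hE
  rw [card_sdiff_of_subset hWV] at h
  have h' : (E.card : ℝ) ≤ C.card + ((V.card - (verts C).card).choose 2 : ℕ) := by
    exact_mod_cast h
  rwa [Nat.cast_choose_two, Nat.cast_sub (card_le_card hWV), hVt] at h'

lemma IsTightComponent.card_filter_mem_lt_card_verts (hE2 : ∀ e ∈ E, e.card = 2)
    (hC : IsTightComponent 2 E C) (hv : v ∈ verts C) :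
    (E.filter (v ∈ ·)).card < (verts C).card := by
  have hsub : E.filter (v ∈ ·) ⊆ ((verts C).erase v).image fun b => {v, b} := by
    intro e he
    obtain ⟨heE, hve⟩ := mem_filter.1 he
    obtain ⟨b, hbv, rfl⟩ := exists_eq_pair_of_card_eq_two (hE2 e heE) hve
    have heC := hC.mem_of_mem_verts heE (hE2 _ heE) hv hve
    exact mem_image.2 ⟨b, mem_erase.2 ⟨hbv, mem_verts.2 ⟨_, heC, by simp⟩⟩, rfl⟩
  exact ((card_le_card hsub).trans card_image_le).trans_lt
    (card_erase_lt_of_mem hv)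

lemma sum_card_filter_mem_eq (hE : ∀ e ∈ E, e ⊆ V ∧ e.card = 2) :
    ∑ v ∈ V, (E.filter (v ∈ ·)).card = 2 * E.card := by
  have h := sum_card_bipartiteAbove_eq_sum_card_bipartiteBelow (· ∈ ·) (s := V) (t := E)
  simp only [bipartiteAbove, bipartiteBelow] at h
  rw [h, sum_congr rfl fun e he => ?_, sum_const, smul_eq_mul, mul_comm]
  rw [filter_mem_eq_inter, inter_eq_right.2 (hE e he).1, (hE e he).2]

def nbr (C : Finset (Finset A)) (v : A) : Finset A := (verts C).filter fun b => {v, b} ∈ C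

lemma mem_nbr {b : A} : b ∈ nbr C v ↔ {v, b} ∈ C :=
  ⟨fun h => (mem_filter.1 h).2,
    fun h => mem_filter.2 ⟨mem_verts.2 ⟨_, h, by simp⟩, h⟩⟩

lemma mem_nbr_comm {b : A} : b ∈ nbr C v ↔ v ∈ nbr C b := by
  rw [mem_nbr, mem_nbr, pair_comm]

lemma disjoint_biUnion_nbr_of_indep {J : Finset A} (hind : ∀ a ∈ J, ∀ b ∈ J, {a, b} ∉ C) :
    Disjoint J (J.biUnion (nbr C)) :=
  disjoint_left.2 fun a ha haN => by
    obtain ⟨b, hb, hab⟩ := mem_biUnion.1 haN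
    exact hind b hb a ha (mem_nbr.1 hab)

/-- Hall's condition with deficiency `D` only has to be checked on independent sets: for
general `s`, the set `J` of vertices of `s` outside `N(s)` and `N(s ∩ N(s))` is independent,
and `s \ J` embeds into `N(s) \ N(J)`. -/
lemma card_le_card_biUnion_nbr_add_of_indep {D : ℕ}
    (hind : ∀ J ⊆ verts C, (∀ a ∈ J, ∀ b ∈ J, {a, b} ∉ C) →
      J.card ≤ (J.biUnion (nbr C)).card + D)
    {s : Finset A} (hs : s ⊆ verts C) : s.card ≤ (s.biUnion (nbr C)).card + D := by
  set N := s.biUnion (nbr C)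
  set J := s.filter fun x => x ∉ N ∧ x ∉ (s ∩ N).biUnion (nbr C)
  have hJs : J ⊆ s := filter_subset _ _
  have hJ := hind J (hJs.trans hs) fun a ha b hb hab =>
    (mem_filter.1 hb).2.1 (mem_biUnion.2 ⟨a, hJs ha, mem_nbr.2 hab⟩)
  have hrest : s \ J ⊆ N \ J.biUnion (nbr C) := by
    intro x hx
    obtain ⟨hxs, hxJ⟩ := mem_sdiff.1 hx
    have hxN : x ∈ N := by
      by_contra hxN
      obtain ⟨k, hk, hxk⟩ := mem_biUnion.1
        (not_not.1 fun h => hxJ (mem_filter.2 ⟨hxs, hxN, h⟩))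
      exact hxN (mem_biUnion.2 ⟨k, (mem_inter.1 hk).1, hxk⟩)
    refine mem_sdiff.2 ⟨hxN, fun hxNJ => ?_⟩
    obtain ⟨j, hj, hxj⟩ := mem_biUnion.1 hxNJ
    exact (mem_filter.1 hj).2.2
      (mem_biUnion.2 ⟨x, mem_inter.2 ⟨hxs, hxN⟩, mem_nbr_comm.1 hxj⟩)
  have h₁ := card_sdiff_add_card_eq_card hJs
  have h₂ := card_sdiff_add_card_eq_card (t := N)
    (biUnion_subset_biUnion_of_subset_left (nbr C) hJs)
  have h₃ := card_le_card hrest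
  omega

/-- No edge of `E` inside `U` meets `J`: it would lie in `C`, putting its other end in `N(J)`. -/
lemma IsTightComponent.card_add_choose_le_of_indep (hE : ∀ e ∈ E, e ⊆ V ∧ e.card = 2)
    (hC : IsTightComponent 2 E C) {J : Finset A} (hJ : J ⊆ verts C)
    (hind : ∀ a ∈ J, ∀ b ∈ J, {a, b} ∉ C) :
    let U := verts C \ J.biUnion (nbr C)
    E.card + U.card.choose 2 ≤
      (verts C).card.choose 2 + (U \ J).card.choose 2 + (V \ verts C).card.choose 2 := by
  intro U
  set W := verts C
  have hUW : U ⊆ W := sdiff_subset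
  have hJU : J ⊆ U := fun a ha =>
    mem_sdiff.2 ⟨hJ ha, disjoint_left.1 (disjoint_biUnion_nbr_of_indep hind) ha⟩
  set X := U.powersetCard 2 \ (U \ J).powersetCard 2
  have hXW : X ⊆ W.powersetCard 2 := fun e he =>
    powersetCard_mono hUW (mem_sdiff.1 he).1
  have hEX : E ⊆ (W.powersetCard 2 \ X) ∪ (V \ W).powersetCard 2 := by
    intro e he
    by_cases hmeet : ∃ x ∈ e, x ∈ W
    · obtain ⟨x, hxe, hxW⟩ := hmeet
      have heC := hC.mem_of_mem_verts he (hE e he).2 hxW hxe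
      refine mem_union_left _ (mem_sdiff.2
        ⟨mem_powersetCard.2 ⟨fun y hy => mem_verts.2 ⟨e, heC, hy⟩, (hE e he).2⟩,
          fun heX => ?_⟩)
      obtain ⟨heU, heUJ⟩ := mem_sdiff.1 heX
      obtain ⟨a, hae, haJ⟩ : ∃ a ∈ e, a ∈ J := by
        by_contra! h
        exact heUJ (mem_powersetCard.2 ⟨fun y hy => mem_sdiff.2
          ⟨(mem_powersetCard.1 heU).1 hy, h y hy⟩, (hE e he).2⟩)
      obtain ⟨b, -, rfl⟩ := exists_eq_pair_of_card_eq_two (hE _ he).2 hae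
      have hbU := (mem_powersetCard.1 heU).1 (mem_insert_of_mem
        (mem_singleton_self b))
      exact (mem_sdiff.1 hbU).2 (mem_biUnion.2 ⟨a, haJ, mem_nbr.2 heC⟩)
    · push Not at hmeet
      exact mem_union_right _ (mem_powersetCard.2
        ⟨fun y hy => mem_sdiff.2 ⟨(hE e he).1 hy, hmeet y hy⟩, (hE e he).2⟩)
  have hX : X.card + ((U \ J).powersetCard 2).card = (U.powersetCard 2).card :=
    card_sdiff_add_card_eq_card (powersetCard_mono sdiff_subset)
  have h₁ := (card_le_card hEX).trans (card_union_le _ _)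
  have h₂ := card_sdiff_add_card_eq_card hXW
  simp only [card_powersetCard] at hX h₁ h₂
  omega

end Graphs

section Triangles

variable {C : Finset (Finset A)}

lemma hasSwitcher_of_triangle {a b c : A} (hab : {a, b} ∈ C) (hac : {a, c} ∈ C)
    (hbc : {b, c} ∈ C) (hne : a ≠ b) (hca : c ≠ a) (hcb : c ≠ b) : HasSwitcher C := by
  have hc : c ∉ ({a, b} : Finset A) := by simp [hca, hcb]
  have hcb' : insert c (({a, b} : Finset A).erase a) = {b, c} := by
    rw [erase_insert (by simpa using hne), pair_comm]
  refine ⟨{a, b}, hab, a, mem_insert_self _ _, fun b' hb' => ⟨c, hc, hcb' ▸ hbc, ?_⟩⟩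
  rcases mem_insert.1 hb' with rfl | hb'
  · rwa [hcb']
  · rwa [mem_singleton.1 hb', pair_comm, erase_insert (by simpa using hne.symm),
      pair_comm]

/-- Mantel's theorem, from Mathlib's Turán theorem applied to `C` as a graph on `verts C`. -/
lemma four_mul_card_le_sq_of_triangleFree (hC2 : ∀ e ∈ C, e.card = 2)
    (hfree : ∀ a b c : A, {a, b} ∈ C → {a, c} ∈ C → {b, c} ∈ C → False) :
    4 * C.card ≤ (verts C).card ^ 2 := by
  classical
  let G := SimpleGraph.fromRel fun x y : verts C => ({x.1, y.1} : Finset A) ∈ C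
  have hadj : ∀ x y, G.Adj x y ↔ x ≠ y ∧ ({x.1, y.1} : Finset A) ∈ C := by
    intro x y
    simp only [G, SimpleGraph.fromRel_adj, pair_comm y.1 x.1, or_self]
  have hG : G.CliqueFree 3 := by
    intro s hs
    obtain ⟨a, b, c, hab, hac, hbc, -⟩ := SimpleGraph.is3Clique_iff.1 hs
    exact hfree a b c ((hadj a b).1 hab).2 ((hadj a c).1 hac).2 ((hadj b c).1 hbc).2
  have hCG : C.card ≤ G.edgeFinset.card := by
    let f : Sym2 (verts C) → Finset A :=
      Sym2.lift ⟨fun x y => {x.1, y.1}, fun _ _ => pair_comm _ _⟩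
    refine (card_le_card fun e he => ?_).trans (card_image_le (f := f))
    obtain ⟨x, y, hxy, rfl⟩ := card_eq_two.1 (hC2 e he)
    have hx : x ∈ verts C := mem_verts.2 ⟨_, he, by simp⟩
    have hy : y ∈ verts C := mem_verts.2 ⟨_, he, by simp⟩
    refine mem_image.2 ⟨s(⟨x, hx⟩, ⟨y, hy⟩), ?_, rfl⟩
    rw [SimpleGraph.mem_edgeFinset, SimpleGraph.mem_edgeSet, hadj]
    exact ⟨fun h => hxy (congrArg Subtype.val h), he⟩
  have hturan := hG.card_edgeFinset_le (r := 2)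
  simp only [Fintype.card_coe] at hturan
  set n := (verts C).card
  rw [Nat.choose_eq_zero_of_lt (Nat.mod_lt n two_pos), Nat.add_zero] at hturan
  have := Nat.div_mul_le_self ((n ^ 2 - (n % 2) ^ 2) * (2 - 1)) (2 * 2)
  omega

lemma hasSwitcher_of_sq_lt (hC2 : ∀ e ∈ C, e.card = 2) (h : (verts C).card ^ 2 < 4 * C.card) :
    HasSwitcher C := by
  by_contra hno
  have hne : ∀ a b : A, {a, b} ∈ C → a ≠ b := fun a b hab hab' => by
    simpa [hab'] using hC2 _ hab
  exact h.not_ge (four_mul_card_le_sq_of_triangleFree hC2 fun a b c hab hac hbc =>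
    hno <| hasSwitcher_of_triangle hab hac hbc (hne a b hab) (hne a c hac).symm
      (hne b c hbc).symm)

end Triangles

section FractionalMatchings

variable {C : Finset (Finset A)}

lemma HasFracMatching.mono {m m' : ℝ} (h : HasFracMatching C m) (hm : m' ≤ m) :
    HasFracMatching C m' :=
  let ⟨w, hw, hv, hsum⟩ := h
  ⟨w, hw, hv, hm.trans hsum⟩

/-- Giving every edge `{u, p u}` weight `1/2` per occurrence loads each vertex at most twice:
once as some `u`, once as some `p u`. -/
lemma hasFracMatching_of_injOn (hC2 : ∀ e ∈ C, e.card = 2) {S : Finset A} {p : A → A}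
    (hp : Set.InjOn p S) (hS : ∀ u ∈ S, {u, p u} ∈ C) :
    HasFracMatching C (S.card / 2) := by
  let fib : Finset A → Finset A := fun e => S.filter fun u => {u, p u} = e
  have hfib : ∀ e ∈ C, (fib e).card ≤ 2 := fun e he =>
    (hC2 e he) ▸ card_le_card fun u hu => (mem_filter.1 hu).2 ▸ by simp
  have hload : ∀ v, (S.filter fun u => v ∈ ({u, p u} : Finset A)).card ≤ 2 := by
    intro v
    have h₁ : (S.filter fun u => u = v).card ≤ 1 :=
      card_le_one.2 fun a ha b hb => (mem_filter.1 ha).2.trans (mem_filter.1 hb).2.symm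
    have h₂ : (S.filter fun u => p u = v).card ≤ 1 :=
      card_le_one.2 fun a ha b hb => hp (mem_filter.1 ha).1 (mem_filter.1 hb).1
        ((mem_filter.1 ha).2.trans (mem_filter.1 hb).2.symm)
    calc (S.filter fun u => v ∈ ({u, p u} : Finset A)).card
        ≤ ((S.filter fun u => u = v) ∪ (S.filter fun u => p u = v)).card :=
          card_le_card fun u hu => ?_
      _ ≤ 2 := (card_union_le _ _).trans (by omega)
    obtain ⟨hu, hvu⟩ := mem_filter.1 hu
    rcases mem_insert.1 hvu with h | h
    · exact mem_union_left _ (mem_filter.2 ⟨hu, h.symm⟩)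
    · exact mem_union_right _ (mem_filter.2 ⟨hu, (mem_singleton.1 h).symm⟩)
  refine ⟨fun e => (fib e).card / 2, fun e he => ⟨by positivity, ?_⟩, fun v => ?_, ?_⟩
  · have := hfib e he
    rw [div_le_one two_pos]
    exact_mod_cast this
  · rw [← sum_div, div_le_one two_pos]
    have hcount := card_eq_sum_card_fiberwise (f := fun u => ({u, p u} : Finset A))
      (s := S.filter fun u => v ∈ ({u, p u} : Finset A)) (t := C.filter fun e => v ∈ e)
      fun u hu => mem_filter.2 ⟨hS u (mem_filter.1 hu).1, (mem_filter.1 hu).2⟩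
    have hfibv : ∀ e ∈ C.filter fun e => v ∈ e,
        ((S.filter fun u => v ∈ ({u, p u} : Finset A)).filter fun u => {u, p u} = e).card =
          (fib e).card := by
      intro e he
      rw [filter_filter]
      exact congrArg card <| filter_congr fun u _ =>
        ⟨fun h => h.2, fun h => ⟨h ▸ (mem_filter.1 he).2, h⟩⟩
    rw [sum_congr rfl hfibv] at hcount
    exact_mod_cast hcount ▸ hload v
  · rw [← sum_div, card_eq_sum_card_fiberwise hS]
    push_cast
    rfl

/-- Hall's theorem with deficiency `D`: pad every neighbourhood with `D` common dummies. -/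
lemma exists_injOn_of_card_le_card_biUnion_add {W : Finset A}
    (N : A → Finset A) (D : ℕ) (h : ∀ s ⊆ W, s.card ≤ (s.biUnion N).card + D) :
    ∃ S ⊆ W, ∃ p : A → A, Set.InjOn p S ∧ (∀ u ∈ S, p u ∈ N u) ∧ W.card ≤ S.card + D := by
  let t : W → Finset (A ⊕ ℕ) := fun u => (N u).disjSum (range D)
  have hall : ∀ s : Finset W, s.card ≤ (s.biUnion t).card := by
    intro s
    rcases s.eq_empty_or_nonempty with rfl | ⟨u₀, hu₀⟩
    · simp
    have hsub : ((s.map (Function.Embedding.subtype _)).biUnion N).disjSum (range D) ⊆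
        s.biUnion t := by
      rintro (b | m) hx
      · obtain ⟨_, hu, hb⟩ := mem_biUnion.1 (inl_mem_disjSum.1 hx)
        obtain ⟨u, hus, rfl⟩ := mem_map.1 hu
        exact mem_biUnion.2 ⟨u, hus, inl_mem_disjSum.2 hb⟩
      · exact mem_biUnion.2 ⟨u₀, hu₀, inr_mem_disjSum.2 (inr_mem_disjSum.1 hx)⟩
    calc s.card = (s.map (Function.Embedding.subtype _)).card := (card_map _).symm
      _ ≤ ((s.map (Function.Embedding.subtype _)).biUnion N).card + D := h _ fun x hx => by
          obtain ⟨u, -, rfl⟩ := mem_map.1 hx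
          exact u.2
      _ ≤ (s.biUnion t).card := by
          simpa [card_disjSum] using card_le_card hsub
  obtain ⟨f, hf, hft⟩ := (all_card_le_biUnion_card_iff_exists_injective t).1 hall
  let p : A → A := fun x => if hx : x ∈ W then (f ⟨x, hx⟩).getLeft?.getD x else x
  have hp : ∀ u : W, ∀ b, f u = .inl b → p u = b := by
    intro u b hb
    simp [p, hb]
  set L := W.attach.filter fun u => (f u).isLeft with hL
  have hleft : ∀ u ∈ L, f u = .inl (p u) := by
    intro u hu
    obtain ⟨b, hb⟩ := Sum.isLeft_iff.1 (mem_filter.1 hu).2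
    rw [hb, hp u b hb]
  refine ⟨L.map (Function.Embedding.subtype _), fun x hx => ?_, p, ?_, ?_, ?_⟩
  · obtain ⟨u, -, rfl⟩ := mem_map.1 hx
    exact u.2
  · rintro _ hx _ hy hxy
    obtain ⟨u, hu, rfl⟩ := mem_map.1 hx
    obtain ⟨v, hv, rfl⟩ := mem_map.1 hy
    exact congrArg Subtype.val (hf ((hleft u hu).trans (hxy ▸ (hleft v hv).symm)))
  · intro x hx
    obtain ⟨u, hu, rfl⟩ := mem_map.1 hx
    exact inl_mem_disjSum.1 (hleft u hu ▸ hft u)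
  · have hR : (W.attach.filter fun u => ¬ (f u).isLeft).card ≤ D := by
      refine (card_le_card_of_injOn (t := (range D).map Function.Embedding.inr) f
        (fun u hu => ?_) hf.injOn).trans (by simp)
      obtain ⟨m, hm⟩ := Sum.isRight_iff.1 (by simpa using (mem_filter.1 hu).2)
      rw [hm]
      exact mem_map_of_mem _ (inr_mem_disjSum.1 (hm ▸ hft u))
    have hsplit : L.card + (W.attach.filter fun u => ¬ (f u).isLeft).card = W.card := by
      rw [hL, card_filter_add_card_filter_not, card_attach]
    rw [card_map]
    omega

lemma hasFracMatching_of_card_le_card_biUnion_nbr_add (hC2 : ∀ e ∈ C, e.card = 2) {D : ℕ}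
    (hall : ∀ s ⊆ verts C, s.card ≤ (s.biUnion (nbr C)).card + D) :
    HasFracMatching C (((verts C).card - D : ℝ) / 2) := by
  obtain ⟨S, -, p, hp, hpN, hcard⟩ := exists_injOn_of_card_le_card_biUnion_add (nbr C) D hall
  refine (hasFracMatching_of_injOn hC2 hp fun u hu => mem_nbr.1 (hpN u hu)).mono ?_
  have : ((verts C).card : ℝ) ≤ S.card + D := by exact_mod_cast hcard
  linarith

end FractionalMatchings

lemma four_ninths_le_of_dense_split {T ν e c x : ℝ} (hν0 : 0 < ν) (hν1 : ν ≤ 1/9)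
    (hT : 1000000 ≤ ν * T) (he : (5/9 + ν) * (T * (T - 1) / 2) ≤ e)
    (hsplit : e ≤ c + (T - x) * (T - x - 1) / 2) (hc : c ≤ x * (x - 1) / 2)
    (hx : 5/9 * T ≤ x) (hxT : x ≤ T) : (4/9 + ν) * (T * (T - 1) / 2) ≤ c := by
  have hT1 : (9000000 : ℝ) ≤ T := by nlinarith
  have hνT := mul_pos hν0 (by linarith : (0:ℝ) < T)
  have hx' : (2/3 + ν/2) * T ≤ x := by
    by_contra! hlt
    nlinarith [mul_nonneg (by linarith : (0:ℝ) ≤ (2/3 + ν/2) * T - x)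
      (by nlinarith : (0:ℝ) ≤ x + (2/3 + ν/2) * T - T)]
  nlinarith [mul_nonneg (by linarith : (0:ℝ) ≤ (1/3 - ν/2) * T - (T - x))
      (by nlinarith : (0:ℝ) ≤ (1/3 - ν/2) * T + (T - x))]

lemma two_thirds_le_of_four_ninths_le {T ν c w : ℝ} (hν0 : 0 < ν) (hν1 : ν ≤ 1/9)
    (hT : 1000000 ≤ ν * T) (hc : (4/9 + ν) * (T * (T - 1) / 2) ≤ c)
    (hcw : c ≤ w * (w - 1) / 2) (hw : 0 ≤ w) : (2/3 + ν/8) * T ≤ w := by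
  have hT1 : (9000000 : ℝ) ≤ T := by nlinarith
  by_contra! hlt
  nlinarith [mul_nonneg (by linarith : (0:ℝ) ≤ (2/3 + ν/8) * T - w)
    (by nlinarith : (0:ℝ) ≤ (2/3 + ν/8) * T + w),
    mul_le_mul_of_nonneg_right hT (by linarith : (0:ℝ) ≤ T)]

lemma sq_lt_four_mul_of_dense {T ν e c w : ℝ} (hν0 : 0 < ν) (hν1 : ν ≤ 1/9)
    (hT : 1000000 ≤ ν * T) (he : (5/9 + ν) * (T * (T - 1) / 2) ≤ e)
    (hsplit : e ≤ c + (T - w) * (T - w - 1) / 2)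
    (hw : (2/3 + ν/8) * T ≤ w) (hwT : w ≤ T) : w ^ 2 < 4 * c := by
  have hT1 : (9000000 : ℝ) ≤ T := by nlinarith
  nlinarith [mul_nonneg (by linarith : (0:ℝ) ≤ T - w) (by nlinarith : (0:ℝ) ≤ w - T/3),
    mul_nonneg (by nlinarith : (0:ℝ) ≤ w - (2/3)*T) (by linarith : (0:ℝ) ≤ T - w),
    mul_pos hν0 (by nlinarith : (0:ℝ) < T)]

lemma false_of_dense_disjoint {T ν w₁ w₂ m e₁ e₂ c₁ c₂ : ℝ} (hν0 : 0 < ν)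
    (hT : 1000000 ≤ ν * T)
    (he₁ : (5/9 + ν) * (T * (T - 1) / 2) ≤ e₁) (he₂ : (5/9 + ν) * (T * (T - 1) / 2) ≤ e₂)
    (hsplit₁ : e₁ ≤ c₁ + (T - w₁) * (T - w₁ - 1) / 2)
    (hsplit₂ : e₂ ≤ c₂ + (T - w₂) * (T - w₂ - 1) / 2)
    (hw₁ : (2/3 + ν/8) * T ≤ w₁) (hw₁T : w₁ ≤ T)
    (hw₂ : (2/3 + ν/8) * T ≤ w₂) (hw₂T : w₂ ≤ T)
    (hm : w₁ + w₂ - T ≤ m)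
    (hpairs : m * (m - 1) / 2 + c₁ + c₂ ≤ w₁ * (w₁ - 1) / 2 + w₂ * (w₂ - 1) / 2) : False := by
  have hT1 : (9000000 : ℝ) ≤ T := by nlinarith
  have hνT := mul_pos hν0 (by linarith : (0:ℝ) < T)
  have hs : (1:ℝ) ≤ w₁ + w₂ - T := by nlinarith
  nlinarith [mul_nonneg (by linarith : (0:ℝ) ≤ m - (w₁ + w₂ - T))
      (by linarith : (0:ℝ) ≤ m + (w₁ + w₂ - T) - 1),
    mul_nonneg (by linarith : (0:ℝ) ≤ (1/3 - ν/8) * T - (w₁ - w₂))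
      (by linarith : (0:ℝ) ≤ (1/3 - ν/8) * T + (w₁ - w₂))]

lemma false_of_dense_deficiency {T ν e w i n : ℝ} (hT : 1000000 ≤ ν * T)
    (he : (5/9 + ν) * (T * (T - 1) / 2) ≤ e)
    (hmissing : e + (w - n) * (w - n - 1) / 2 ≤
      w * (w - 1) / 2 + (w - n - i) * (w - n - i - 1) / 2 + (T - w) * (T - w - 1) / 2)
    (hw : (2/3 + ν/8) * T ≤ w) (hwT : w ≤ T) (hn : 0 ≤ n) (hin : i + n ≤ w)
    (hdef : w - (2/3 + ν/50) * T ≤ i - n) : False := by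
  have hT1 : (9000000 : ℝ) ≤ T := by nlinarith
  set d := w - (2/3 + ν/50) * T with hd
  have hd0 : 0 ≤ d := by nlinarith
  have hG : i * (2*w - 2*n - i - 1) ≤ w*(w-1) + (T-w)*((T-w)-1) - 2*e := by linarith
  have hPA : w*(w-1) + (T-w)*((T-w)-1) - 2*e < d * (2*w - d - 1) := by
    nlinarith [mul_nonneg (by nlinarith : (0:ℝ) ≤ w - (2/3)*T)
      (by linarith : (0:ℝ) ≤ (4/3)*T - w)]
  have hPB : w*(w-1) + (T-w)*((T-w)-1) - 2*e < ((w+d)/2) * ((w+d)/2 - 1) := by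
    nlinarith [mul_nonneg (by linarith : (0:ℝ) ≤ T - w) (by nlinarith : (0:ℝ) ≤ w - T/3)]
  rcases le_or_gt (2*i) (w + d) with hc | hc
  · nlinarith [mul_nonneg (by linarith : (0:ℝ) ≤ i - d) (by linarith : (0:ℝ) ≤ w + d - 2*i),
      mul_nonneg (by linarith : (0:ℝ) ≤ i) (by linarith : (0:ℝ) ≤ i - n - d)]
  · nlinarith [mul_nonneg (by linarith : (0:ℝ) ≤ i - (w+d)/2)
      (by nlinarith : (0:ℝ) ≤ i + (w+d)/2 - 1),
      mul_nonneg (by linarith : (0:ℝ) ≤ i) (by linarith : (0:ℝ) ≤ w - i - n)]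

lemma card_add_card_add_card_le {α : Type*} [DecidableEq α] {P C₁ C₂ X₁ X₂ : Finset α}
    (hC : Disjoint C₁ C₂) (h₁ : C₁ ⊆ X₁) (h₂ : C₂ ⊆ X₂) (hP : P ⊆ X₁ ∩ X₂) :
    P.card + C₁.card + C₂.card ≤ X₁.card + X₂.card := by
  have hU := card_le_card (union_subset_union h₁ h₂)
  rw [card_union_of_disjoint hC] at hU
  have := card_union_add_card_inter X₁ X₂
  have := card_le_card hP
  omega

lemma cast_card_le_pairs_card_verts {C : Finset (Finset A)} (hC2 : ∀ e ∈ C, e.card = 2) :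
    (C.card : ℝ) ≤ (verts C).card * ((verts C).card - 1) / 2 := by
  rw [← Nat.cast_choose_two]
  exact_mod_cast card_le_choose_card_verts hC2

structure IsLargestComponentOfDense (ν : ℝ) (t : ℕ) (V : Finset A) (E C : Finset (Finset A)) :
    Prop where
  nu_pos : 0 < ν
  nu_le : ν ≤ 1 / 9
  large : 1000000 ≤ ν * t
  card_eq : V.card = t
  edges : ∀ e ∈ E, e ⊆ V ∧ e.card = 2
  dense : (5 / 9 + ν) * (t.choose 2 : ℝ) ≤ E.card
  isTightComponent : IsTightComponent 2 E C
  card_le : ∀ C', IsTightComponent 2 E C' → C'.card ≤ C.card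

namespace IsLargestComponentOfDense

variable {ν : ℝ} {t : ℕ} {V : Finset A} {E C : Finset (Finset A)}

lemma edge_card (h : IsLargestComponentOfDense ν t V E C) : ∀ e ∈ C, e.card = 2 :=
  fun e he => (h.edges e (h.isTightComponent.1 he)).2

lemma dense_pairs (h : IsLargestComponentOfDense ν t V E C) :
    (5 / 9 + ν) * ((t : ℝ) * (t - 1) / 2) ≤ E.card := by
  simpa [Nat.cast_choose_two] using h.dense

protected lemma verts_subset (h : IsLargestComponentOfDense ν t V E C) : verts C ⊆ V :=
  verts_subset (fun e he => (h.edges e he).1) h.isTightComponent.1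

lemma card_verts_le (h : IsLargestComponentOfDense ν t V E C) : ((verts C).card : ℝ) ≤ t := by
  exact_mod_cast h.card_eq ▸ card_le_card h.verts_subset

/-- The component of a vertex of at least average degree already has this many edges. -/
lemma four_ninths_le_card (h : IsLargestComponentOfDense ν t V E C) :
    (4 / 9 + ν) * (t.choose 2 : ℝ) ≤ C.card := by
  have hE2 : ∀ e ∈ E, e.card = 2 := fun e he => (h.edges e he).2
  have hν := h.nu_le
  have hT := h.large
  have hdens := h.dense_pairs
  have ht : (9000000 : ℝ) ≤ t := by nlinarith [h.nu_pos]
  obtain ⟨v, -, hv⟩ : ∃ v ∈ V, 2 * E.card ≤ t * (E.filter (v ∈ ·)).card := by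
    refine exists_le_of_sum_le (card_pos.1 ?_) ?_
    · rw [h.card_eq]; exact_mod_cast (by linarith : (0 : ℝ) < t)
    · rw [sum_const, ← mul_sum, sum_card_filter_mem_eq h.edges, h.card_eq,
        smul_eq_mul, mul_left_comm]
  have hEpos : (0 : ℝ) < E.card := by nlinarith
  obtain ⟨e₀, he₀⟩ : (E.filter (v ∈ ·)).Nonempty := card_pos.1 <|
    Nat.pos_of_ne_zero fun h0 => by
      rw [h0, mul_zero] at hv
      exact hEpos.ne' (by exact_mod_cast (by omega : E.card = 0))
  obtain ⟨he₀E, hve₀⟩ := mem_filter.1 he₀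
  obtain ⟨Cv, hCv, he₀Cv⟩ := exists_isTightComponent_mem he₀E (hE2 e₀ he₀E)
  have hdeg : ((E.filter (v ∈ ·)).card : ℝ) + 1 ≤ (verts Cv).card := by
    exact_mod_cast hCv.card_filter_mem_lt_card_verts hE2 (mem_verts.2 ⟨e₀, he₀Cv, hve₀⟩)
  have hv' : (2 * E.card : ℝ) ≤ t * (E.filter (v ∈ ·)).card := by exact_mod_cast hv
  have hdeg' : (5 / 9 + ν) * ((t : ℝ) - 1) ≤ (E.filter (v ∈ ·)).card :=
    le_of_mul_le_mul_left (by nlinarith) (by linarith : (0 : ℝ) < t)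
  have hCvt : ((verts Cv).card : ℝ) ≤ t := by
    exact_mod_cast h.card_eq ▸ card_le_card (verts_subset (fun e he => (h.edges e he).1) hCv.1)
  have hCv_le := cast_card_le_pairs_card_verts fun e he => hE2 e (hCv.1 he)
  have hCv_ge := four_ninths_le_of_dense_split h.nu_pos hν hT hdens
    (hCv.card_le_card_add_pairs h.edges h.card_eq) hCv_le (by nlinarith) hCvt
  rw [Nat.cast_choose_two]
  exact hCv_ge.trans (by exact_mod_cast h.card_le Cv hCv)

lemma card_verts_ge (h : IsLargestComponentOfDense ν t V E C) :
    (2 / 3 + ν / 8) * t ≤ (verts C).card :=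
  two_thirds_le_of_four_ninths_le h.nu_pos h.nu_le h.large
    (by simpa [Nat.cast_choose_two] using h.four_ninths_le_card)
    (cast_card_le_pairs_card_verts h.edge_card) (Nat.cast_nonneg _)

lemma hasSwitcher (h : IsLargestComponentOfDense ν t V E C) : HasSwitcher C :=
  hasSwitcher_of_sq_lt h.edge_card <| by
    exact_mod_cast sq_lt_four_mul_of_dense h.nu_pos h.nu_le h.large h.dense_pairs
      (h.isTightComponent.card_le_card_add_pairs h.edges h.card_eq) h.card_verts_ge
      h.card_verts_le

/-- An independent set `J` with `|J| - |N(J)| > |V(C)| - (2/3 + ν/50) t` would leave too many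
pairs uncovered by `E`; so Hall's condition holds with this deficiency. -/
lemma hasFracMatching (h : IsLargestComponentOfDense ν t V E C) :
    HasFracMatching C ((1 / 3 + ν / 100) * t) := by
  have hw := h.card_verts_ge
  set w := (verts C).card
  set D := ⌊(w : ℝ) - (2 / 3 + ν / 50) * t⌋₊
  have hind : ∀ J ⊆ verts C, (∀ a ∈ J, ∀ b ∈ J, {a, b} ∉ C) →
      J.card ≤ (J.biUnion (nbr C)).card + D := by
    intro J hJ hJind
    by_contra! hlt
    have hcount := h.isTightComponent.card_add_choose_le_of_indep h.edges hJ hJind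
    set N := J.biUnion (nbr C)
    have hNW : N ⊆ verts C := biUnion_subset.2 fun _ _ => filter_subset _ _
    have hJN := disjoint_biUnion_nbr_of_indep hJind
    have hJU : J ⊆ verts C \ N := fun a ha =>
      mem_sdiff.2 ⟨hJ ha, disjoint_left.1 hJN ha⟩
    have hJNw : J.card + N.card ≤ w := by
      rw [← card_union_of_disjoint hJN]
      exact card_le_card (union_subset hJ hNW)
    simp only [card_sdiff_of_subset hJU, card_sdiff_of_subset hNW,
      card_sdiff_of_subset h.verts_subset, h.card_eq] at hcount
    have hcount' : (E.card : ℝ) + ((w - N.card : ℕ).choose 2 : ℕ) ≤ (w.choose 2 : ℕ) +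
        ((w - N.card - J.card : ℕ).choose 2 : ℕ) + ((t - w : ℕ).choose 2 : ℕ) := by
      exact_mod_cast hcount
    simp only [Nat.cast_choose_two, Nat.cast_sub (by omega : J.card ≤ w - N.card),
      Nat.cast_sub (by omega : N.card ≤ w),
      Nat.cast_sub (by exact_mod_cast h.card_verts_le : w ≤ t)] at hcount'
    refine false_of_dense_deficiency h.large h.dense_pairs ?_ hw
      h.card_verts_le (Nat.cast_nonneg N.card)
      (by exact_mod_cast hJNw : (J.card : ℝ) + N.card ≤ w) ?_
    · linarith
    · have := Nat.lt_floor_add_one ((w : ℝ) - (2 / 3 + ν / 50) * t)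
      have : (N.card : ℝ) + D + 1 ≤ J.card := by exact_mod_cast hlt
      linarith
  refine (hasFracMatching_of_card_le_card_biUnion_nbr_add h.edge_card
    fun s hs => card_le_card_biUnion_nbr_add_of_indep hind hs).mono ?_
  have := Nat.floor_le (by nlinarith [h.nu_pos] : 0 ≤ (w : ℝ) - (2 / 3 + ν / 50) * t)
  linarith

end IsLargestComponentOfDense

/-- If `C₁` and `C₂` are disjoint, each pair inside `verts C₁ ∩ verts C₂` is a non-edge of
`C₁` or of `C₂`. -/
lemma IsLargestComponentOfDense.inter_nonempty {ν : ℝ} {t : ℕ} {V : Finset A}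
    {E₁ E₂ C₁ C₂ : Finset (Finset A)} (h₁ : IsLargestComponentOfDense ν t V E₁ C₁)
    (h₂ : IsLargestComponentOfDense ν t V E₂ C₂) : (C₁ ∩ C₂).Nonempty := by
  by_contra hdisj
  have hpairs := card_add_card_add_card_le (P := (verts C₁ ∩ verts C₂).powersetCard 2)
    (disjoint_iff_inter_eq_empty.2 (not_nonempty_iff_eq_empty.1 hdisj))
    (subset_powersetCard_verts h₁.edge_card) (subset_powersetCard_verts h₂.edge_card)
    (subset_inter (powersetCard_mono inter_subset_left)
      (powersetCard_mono inter_subset_right))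
  simp only [card_powersetCard] at hpairs
  have hpairs' : (((verts C₁ ∩ verts C₂).card.choose 2 : ℕ) : ℝ) + C₁.card + C₂.card ≤
      ((verts C₁).card.choose 2 : ℕ) + ((verts C₂).card.choose 2 : ℕ) := by
    exact_mod_cast hpairs
  simp only [Nat.cast_choose_two] at hpairs'
  have hm : ((verts C₁).card : ℝ) + (verts C₂).card - t ≤ (verts C₁ ∩ verts C₂).card := by
    have hunion := card_le_card (union_subset h₁.verts_subset h₂.verts_subset)
    have := card_union_add_card_inter (verts C₁) (verts C₂)
    have : (verts C₁).card + (verts C₂).card ≤ t + (verts C₁ ∩ verts C₂).card := by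
      rw [← h₁.card_eq]
      omega
    have : ((verts C₁).card : ℝ) + (verts C₂).card ≤ t + (verts C₁ ∩ verts C₂).card := by
      exact_mod_cast this
    linarith
  exact false_of_dense_disjoint h₁.nu_pos h₁.large h₁.dense_pairs h₂.dense_pairs
    (h₁.isTightComponent.card_le_card_add_pairs h₁.edges h₁.card_eq)
    (h₂.isTightComponent.card_le_card_add_pairs h₂.edges h₂.card_eq)
    h₁.card_verts_ge h₁.card_verts_le h₂.card_verts_ge h₂.card_verts_le hm hpairs'

/-- structure of dense graphs above density 5/9. -/
theorem dense_graphs_five_ninths (μ : ℝ) (hμ : 0 < μ) :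
    ∃ γ₀ : ℝ, 0 < γ₀ ∧ ∀ γ : ℝ, 0 < γ → γ ≤ γ₀ →
      ∃ t₀ : ℕ, ∀ t : ℕ, t₀ ≤ t →
        ∀ (B : Type) [DecidableEq B], ∀ (V : Finset B) (E₁ E₂ C₁ C₂ : Finset (Finset B)),
          V.card = t →
          (∀ e ∈ E₁, e ⊆ V ∧ e.card = 2) → (∀ e ∈ E₂, e ⊆ V ∧ e.card = 2) →
          ((5 / 9 : ℝ) + μ) * ((t.choose 2 : ℕ) : ℝ) ≤ (E₁.card : ℝ) →
          ((5 / 9 : ℝ) + μ) * ((t.choose 2 : ℕ) : ℝ) ≤ (E₂.card : ℝ) →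
          IsTightComponent 2 E₁ C₁ → IsTightComponent 2 E₂ C₂ →
          (∀ C', IsTightComponent 2 E₁ C' → C'.card ≤ C₁.card) →
          (∀ C', IsTightComponent 2 E₂ C' → C'.card ≤ C₂.card) →
          (C₁ ∩ C₂).Nonempty ∧
          HasSwitcher C₁ ∧ HasSwitcher C₂ ∧
          HasFracMatching C₁ ((1 / 3 + γ) * (t : ℝ)) ∧
          HasFracMatching C₂ ((1 / 3 + γ) * (t : ℝ)) ∧
          ((4 / 9 : ℝ) + γ) * ((t.choose 2 : ℕ) : ℝ) ≤ (C₁.card : ℝ) ∧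
          ((4 / 9 : ℝ) + γ) * ((t.choose 2 : ℕ) : ℝ) ≤ (C₂.card : ℝ) := by
  set ν := min μ (1 / 9)
  have hν : 0 < ν := lt_min hμ (by norm_num)
  refine ⟨ν / 100, by positivity, fun γ _ hγ => ⟨⌈1000000 / ν⌉₊,
    fun t ht B _ V E₁ E₂ C₁ C₂ hVt hE₁ hE₂ hd₁ hd₂ hC₁ hC₂ hm₁ hm₂ => ?_⟩⟩
  have hT : 1000000 ≤ ν * t :=
    (div_le_iff₀' hν).1 ((Nat.le_ceil _).trans (by exact_mod_cast ht))
  have hdense : ∀ E : Finset (Finset B), (5 / 9 + μ) * (t.choose 2 : ℝ) ≤ E.card →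
      (5 / 9 + ν) * (t.choose 2 : ℝ) ≤ E.card :=
    fun E hE => le_trans (by gcongr; exact min_le_left _ _) hE
  have h₁ : IsLargestComponentOfDense ν t V E₁ C₁ :=
    ⟨hν, min_le_right _ _, hT, hVt, hE₁, hdense E₁ hd₁, hC₁, hm₁⟩
  have h₂ : IsLargestComponentOfDense ν t V E₂ C₂ :=
    ⟨hν, min_le_right _ _, hT, hVt, hE₂, hdense E₂ hd₂, hC₂, hm₂⟩
  have hmatch : (1 / 3 + γ) * (t : ℝ) ≤ (1 / 3 + ν / 100) * t := by gcongr
  have hcard : (4 / 9 + γ) * (t.choose 2 : ℝ) ≤ (4 / 9 + ν) * t.choose 2 := by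
    gcongr
    linarith
  exact ⟨h₁.inter_nonempty h₂, h₁.hasSwitcher, h₂.hasSwitcher, h₁.hasFracMatching.mono hmatch,
    h₂.hasFracMatching.mono hmatch, hcard.trans h₁.four_ninths_le_card,
    hcard.trans h₂.four_ninths_le_card⟩
end

section
/- Let ℓ ≥ 1 and let C be a tightly connected ℓ-graph that contains a switcher. Then C contains a closed tight walk whose length is congruent to −1 modulo ℓ. -/
open Finset

variable {A : Type*} [DecidableEq A]

/-!
Write `e = {a, u₁, …, u_m}` for the switcher edge with centre `a` (so `m = ℓ - 1`) and `c_b`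
for the vertex the switcher provides for `b ∈ e`. For a rotation `R = (h, …)` of
`(u₁, …, u_m)` take the block `R, c_h, a` of `m + 2` vertices, and concatenate the blocks of
the `m` rotations of `(u₁, …, u_m)` in order. Every `ℓ` cyclically consecutive vertices of the
result form `e`, `e - a + c_h` or `e - h + c_h`, all edges by the switcher property, and the
length is `m (m + 2) ≡ m ≡ -1 (mod ℓ)`.
-/

section Lists

variable {α : Type*}

theorem List.take_rotate_eq_take_drop_append {w : List α} {i k : ℕ}
    (hi : i ≤ w.length) (hk : k ≤ w.length) :
    (w.rotate i).take k = ((w ++ w).drop i).take k := by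
  rw [List.rotate_eq_drop_append_take hi, List.drop_append_of_le_length hi, List.take_append,
    List.take_append, List.take_take, min_eq_left (by rw [List.length_drop]; omega)]

theorem List.drop_mul_flatMap_range' {f : ℕ → List α} {n : ℕ} (hf : ∀ j, (f j).length = n)
    {q N : ℕ} (hq : q ≤ N) (s : ℕ) :
    ((List.range' s N).flatMap f).drop (q * n) = (List.range' (s + q) (N - q)).flatMap f := by
  induction q generalizing s N with
  | zero => simp
  | succ q ih =>
    obtain ⟨N, rfl⟩ : ∃ N', N = N' + 1 := ⟨N - 1, by omega⟩
    rw [List.range'_succ, List.flatMap_cons, Nat.succ_mul, add_comm, ← List.drop_drop,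
      List.drop_left' (hf s), ih (by omega)]
    simp [Nat.add_assoc, Nat.add_comm 1 q]

theorem List.flatMap_range_two_mul {f : ℕ → List α} {m : ℕ} (hf : Function.Periodic f m) :
    (List.range (2 * m)).flatMap f = (List.range m).flatMap f ++ (List.range m).flatMap f := by
  rw [two_mul, List.range_add, List.flatMap_append, List.flatMap_map]
  simp only [add_comm m, show ∀ x, f (x + m) = f x from hf]

end Lists

section ClosedTightWalk

variable {α : Type*} [DecidableEq α] {k : ℕ} {E : Finset (Finset α)}

theorem isClosedTightWalk_of_take_drop_append {w : List α} (hk : k ≤ w.length)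
    (hwin : ∀ i < w.length, (((w ++ w).drop i).take k).toFinset ∈ E) :
    IsClosedTightWalk k E w :=
  ⟨hk, fun i hi => by rw [List.take_rotate_eq_take_drop_append hi.le hk]; exact hwin i hi⟩

theorem isClosedTightWalk_singleton {a : α} (ha : {a} ∈ E) : IsClosedTightWalk 1 E [a] :=
  ⟨le_rfl, fun i hi => by simp_all⟩

theorem isClosedTightWalk_flatMap_range {f : ℕ → List α} {n m : ℕ} (hm : 0 < m)
    (hk : k ≤ n) (hf : ∀ j, (f j).length = n) (hper : Function.Periodic f m)
    (hwin : ∀ j, ∀ r < n, (((f j ++ f (j + 1)).drop r).take k).toFinset ∈ E) :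
    IsClosedTightWalk k E ((List.range m).flatMap f) := by
  have hlen : ((List.range m).flatMap f).length = m * n := by simp [List.length_flatMap, hf]
  refine isClosedTightWalk_of_take_drop_append (by rw [hlen]; nlinarith) fun i hi => ?_
  rw [hlen] at hi
  have hn : 0 < n := Nat.pos_of_ne_zero (by rintro rfl; simp at hi)
  obtain ⟨q, r, hr, rfl⟩ : ∃ q r, r < n ∧ i = q * n + r :=
    ⟨i / n, i % n, Nat.mod_lt i hn, (Nat.div_add_mod' i n).symm⟩
  have hq : q < m := by nlinarith
  rw [← List.flatMap_range_two_mul hper, List.range_eq_range', ← List.drop_drop,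
    List.drop_mul_flatMap_range' hf (by omega), show 2 * m - q = (2 * m - q - 2) + 1 + 1 by omega,
    List.range'_succ, List.range'_succ, List.flatMap_cons, List.flatMap_cons, ← List.append_assoc,
    List.drop_append_of_le_length (by simp [hf]; omega),
    List.take_append_of_le_length (by simp [hf]; omega)]
  simpa using hwin q r hr

end ClosedTightWalk

section Switcher

variable {α : Type*}

/-- The default `a` of `headD` is irrelevant: blocks are only built from nonempty lists. -/
def switcherBlock (co : α → α) (a : α) (R : List α) : List α :=
  R ++ [co (R.headD a), a]

def switcherWalk (co : α → α) (a : α) (U : List α) : List α :=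
  (List.range U.length).flatMap fun j => switcherBlock co a (U.rotate j)

theorem length_switcherWalk (co : α → α) (a : α) (U : List α) :
    (switcherWalk co a U).length = U.length * (U.length + 2) := by
  simp [switcherWalk, switcherBlock, List.length_flatMap]

variable [DecidableEq α] {C : Finset (Finset α)} {e : Finset α} {a : α} {co : α → α}

/-- The next block starts with `(h :: T).rotate 1 = T ++ [h]`; only those `T.length + 1`
vertices of it are reached by a window starting in the block of `h :: T`. -/
theorem toFinset_take_drop_switcherBlock_append_mem (heC : e ∈ C) (hae : a ∈ e)
    (hco_a : ∀ b ∈ e, insert (co b) (e.erase a) ∈ C)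
    (hco_b : ∀ b ∈ e, insert (co b) (e.erase b) ∈ C) {h : α} {T : List α}
    (hnd : (h :: T).Nodup) (hR : (h :: T).toFinset = e.erase a) (rest : List α) {r : ℕ}
    (hr : r ≤ T.length + 2) :
    (((switcherBlock co a (h :: T) ++ (T ++ [h] ++ rest)).drop r).take (T.length + 2)).toFinset
      ∈ C := by
  have hh : h ∈ e.erase a := by simp [← hR]
  have hT : insert a T.toFinset = e.erase h := by
    have hhT : h ∉ T := (List.nodup_cons.mp hnd).1
    ext x
    have hx : x ∈ e.erase a ↔ x = h ∨ x ∈ T := by simp [← hR]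
    simp only [Finset.mem_erase] at hx hh
    simp only [Finset.mem_insert, List.mem_toFinset, Finset.mem_erase]
    grind
  rcases r with _ | s
  · have hwin : ((switcherBlock co a (h :: T) ++ (T ++ [h] ++ rest)).drop 0).take (T.length + 2)
        = h :: T ++ [co h] := by
      simp [switcherBlock, List.take_append]
    rw [hwin]
    convert hco_a h (Finset.mem_of_mem_erase hh) using 1
    rw [← hR]
    ext x
    simp [or_left_comm]
  rcases Nat.lt_or_ge s (T.length + 1) with hs | hs
  · have hwin : ((switcherBlock co a (h :: T) ++ (T ++ [h] ++ rest)).drop (s + 1)).take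
        (T.length + 2) = T.drop s ++ co h :: a :: T.take s := by
      have hs' : s ≤ T.length := Nat.lt_succ_iff.mp hs
      simp [switcherBlock, List.take_append, List.drop_append, Nat.sub_eq_zero_of_le hs',
        show T.length + 2 - (T.length - s) = s + 2 by omega,
        show T.length ≤ T.length + 2 + s by omega]
    rw [hwin]
    convert hco_b h (Finset.mem_of_mem_erase hh) using 1
    rw [← hT]
    ext x
    have hxT : x ∈ T ↔ x ∈ T.take s ∨ x ∈ T.drop s := by
      rw [← List.mem_append, List.take_append_drop]
    simp [hxT, or_comm]
  · obtain rfl : s = T.length + 1 := by omega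
    have hwin : ((switcherBlock co a (h :: T) ++ (T ++ [h] ++ rest)).drop (T.length + 2)).take
        (T.length + 2) = a :: (T ++ [h]) := by
      simp [switcherBlock, List.take_append, List.drop_append, List.drop_eq_nil_of_le,
        List.take_of_length_le]
    rw [hwin]
    convert heC using 1
    rw [← Finset.insert_erase hae, ← hR]
    ext x
    simp

theorem isClosedTightWalk_switcherWalk (heC : e ∈ C) (hae : a ∈ e)
    (hco_a : ∀ b ∈ e, insert (co b) (e.erase a) ∈ C)
    (hco_b : ∀ b ∈ e, insert (co b) (e.erase b) ∈ C) {U : List α} (hU : U ≠ [])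
    (hnd : U.Nodup) (hUe : U.toFinset = e.erase a) :
    IsClosedTightWalk (U.length + 1) C (switcherWalk co a U) := by
  refine isClosedTightWalk_flatMap_range (n := U.length + 2) (List.length_pos_iff.mpr hU)
    (by omega) (fun j => by simp [switcherBlock]) (fun j => ?_) fun j r hr => ?_
  · rw [← List.rotate_mod, Nat.add_mod_right, List.rotate_mod]
  obtain ⟨h, T, hR⟩ : ∃ h T, U.rotate j = h :: T :=
    List.exists_cons_of_ne_nil (List.rotate_eq_nil_iff.not.mpr hU)
  have hR' : U.rotate (j + 1) = T ++ [h] := by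
    rw [← List.rotate_rotate, hR, List.rotate_cons_succ, List.rotate_zero]
  have hlen : U.length = T.length + 1 := by rw [← List.length_rotate U j, hR, List.length_cons]
  have hB : switcherBlock co a (U.rotate (j + 1))
      = T ++ [h] ++ [co ((T ++ [h]).headD a), a] := by
    rw [switcherBlock, hR']
  rw [hB, hR, hlen]
  have hRe : (U.rotate j).toFinset = e.erase a :=
    (List.toFinset_eq_of_perm _ _ (List.rotate_perm U j)).trans hUe
  exact toFinset_take_drop_switcherBlock_append_mem heC hae hco_a hco_b
    (hR ▸ List.nodup_rotate.mpr hnd) (hR ▸ hRe) _ (by omega)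

end Switcher

theorem switcher_closed_walk_mod_general {B : Type*} [DecidableEq B] (l : ℕ)
    (C : Finset (Finset B)) (hC : ∀ e ∈ C, e.card = l)
    (hsw : HasSwitcher C) :
    ∃ w : List B, IsClosedTightWalk l C w ∧ w.length % l = (l - 1) % l := by
  obtain ⟨e, heC, a, hae, hsw⟩ := hsw
  have : Nonempty B := ⟨a⟩
  choose! co _ hco_a hco_b using hsw
  obtain ⟨U, hnd, hUe⟩ : ∃ U : List B, U.Nodup ∧ U.toFinset = e.erase a :=
    ⟨(e.erase a).toList, Finset.nodup_toList _, Finset.toList_toFinset _⟩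
  obtain rfl : U.length + 1 = l := by
    rw [← hC e heC, ← Finset.card_erase_add_one hae, ← hUe, List.toFinset_card_of_nodup hnd]
  rcases eq_or_ne U [] with rfl | hU
  · have he : e = {a} := by
      simpa [Finset.erase_eq_empty_iff, Finset.ne_empty_of_mem hae] using hUe.symm
    exact ⟨[a], isClosedTightWalk_singleton (he ▸ heC), by simp⟩
  · refine ⟨switcherWalk co a U,
      isClosedTightWalk_switcherWalk heC hae hco_a hco_b hU hnd hUe, ?_⟩
    rw [length_switcherWalk, Nat.add_sub_cancel,
      show U.length * (U.length + 2) = U.length + (U.length + 1) * U.length by ring,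
      Nat.add_mul_mod_self_left]

/-- tightly connected plus a switcher gives a closed tight walk of length
`≡ -1 (mod l)`. -/
theorem switcher_closed_walk_mod {B : Type*} [DecidableEq B] (l : ℕ) (hl : 1 ≤ l)
    (C : Finset (Finset B)) (hC : ∀ e ∈ C, e.card = l)
    (hconn : TightlyConnected l C) (hsw : HasSwitcher C) :
    ∃ w : List B, IsClosedTightWalk l C w ∧ w.length % l = (l - 1) % l :=
  switcher_closed_walk_mod_general l C hC hsw
end

section
/- (Short closed walks with prescribed ends and residue.) Let H be a k-graph on t vertices and let X and Y be k-tuples of vertices of H. Suppose there is a closed tight walk in H of length L ≥ k whose first k vertices form the tuple X and whose last k vertices form the tuple Y. Then there is a closed tight walk in H of length at most k·t^k whose first k vertices form X, whose last k vertices form Y, and whose length is congruent to L modulo k. -/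
open Finset

variable {A : Type*} [DecidableEq A]

/-!
If a closed tight walk of length `L` is longer than `k * t ^ k`, then among its `L - k + 1`
non-wrapping windows of `k` consecutive vertices two, starting at positions `p < q` with
`p ≡ q [MOD k]`, coincide: each window spans an edge, so it is an injective `k`-tuple of
vertices, and there are only `k * t.descFactorial k` pairs (residue, injective tuple).
Cutting out the vertices at positions `p, …, q - 1` leaves a closed tight walk with the same
first and last `k` vertices whose length dropped by a multiple of `k`. Iterate.
-/

namespace List

variable {α : Type*}

theorem take_append_congr_right {k : ℕ} {l₁ l₂ l₂' : List α} (h : l₂.take k = l₂'.take k) :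
    (l₁ ++ l₂).take k = (l₁ ++ l₂').take k := by
  rw [take_append, take_append, ← min_eq_left (Nat.sub_le k l₁.length), ← take_take, h,
    take_take]

theorem take_rotate_eq_take_drop_append_self {k i : ℕ} {l : List α} (hk : k ≤ l.length)
    (hi : i ≤ l.length) : (l.rotate i).take k = ((l ++ l).drop i).take k := by
  rw [rotate_eq_drop_append_take hi, drop_append_of_le_length hi, take_append, take_append,
    take_take, length_drop, min_eq_left (by omega)]

theorem drop_length_sub_append {k : ℕ} {l₁ l₂ : List α} (hk : k ≤ l₂.length) :
    (l₁ ++ l₂).drop ((l₁ ++ l₂).length - k) = l₂.drop (l₂.length - k) := by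
  rw [length_append, Nat.add_sub_assoc hk, drop_length_add_append]

theorem card_le_descFactorial_of_nodup [DecidableEq α] {S : Finset (List α)} {V : Finset α}
    {k : ℕ} (hS : ∀ l ∈ S, l.Nodup ∧ l.length = k ∧ ∀ x ∈ l, x ∈ V) :
    S.card ≤ V.card.descFactorial k := by
  have hsub : S ⊆ Finset.univ.image fun e : Fin k ↪ V => ofFn fun i => (e i : α) := by
    intro l hl
    obtain ⟨hnd, rfl, hV⟩ := hS l hl
    refine Finset.mem_image.mpr ⟨⟨fun i => ⟨l[i], hV _ (getElem_mem _)⟩, fun i j hij => ?_⟩,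
      Finset.mem_univ _, ofFn_getElem⟩
    exact Fin.ext (hnd.getElem_inj_iff.mp (congrArg Subtype.val hij))
  calc S.card ≤ _ := Finset.card_le_card hsub
    _ ≤ Fintype.card (Fin k ↪ V) := Finset.card_image_le
    _ = V.card.descFactorial k := by simp [Fintype.card_embedding_eq]

end List

/-- Counting injective rather than arbitrary `k`-tuples is what makes the bound `k * t ^ k`
suffice. -/
theorem Nat.mul_descFactorial_lt_sub_add_one {k t L : ℕ} (h : k * t ^ k < L) :
    k * t.descFactorial k < L - k + 1 := by
  rcases Nat.lt_or_ge k 2 with hk | hk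
  · interval_cases k <;> simp at h ⊢
    omega
  rcases Nat.eq_zero_or_pos t with rfl | ht
  · obtain ⟨j, rfl⟩ : ∃ j, k = j + 1 := ⟨k - 1, by omega⟩
    simp
  have hlt := Nat.descFactorial_lt_pow ht.ne' hk
  have : k * t.descFactorial k + k ≤ k * t ^ k := by nlinarith
  omega

def SameEndsAndResidue {α : Type*} (k : ℕ) (w' w : List α) : Prop :=
  w'.take k = w.take k ∧ w'.drop (w'.length - k) = w.drop (w.length - k) ∧
    w'.length % k = w.length % k

theorem SameEndsAndResidue.trans {α : Type*} {k : ℕ} {w₁ w₂ w₃ : List α}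
    (h₁₂ : SameEndsAndResidue k w₁ w₂) (h₂₃ : SameEndsAndResidue k w₂ w₃) :
    SameEndsAndResidue k w₁ w₃ :=
  ⟨h₁₂.1.trans h₂₃.1, h₁₂.2.1.trans h₂₃.2.1, h₁₂.2.2.trans h₂₃.2.2⟩

section ClosedTightWalk

variable {k : ℕ} {E : Finset (Finset A)} {w : List A}

theorem isClosedTightWalk_iff :
    IsClosedTightWalk k E w ↔ k ≤ w.length ∧ ∀ i < w.length, walkEdgeAt k (w ++ w) i ∈ E := by
  refine and_congr_right fun hk => forall₂_congr fun i hi => ?_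
  rw [List.take_rotate_eq_take_drop_append_self hk hi.le, walkEdgeAt]

theorem IsClosedTightWalk.isTightWalk (hw : IsClosedTightWalk k E w) (hne : w ≠ []) :
    IsTightWalk k E w := by
  refine ⟨hw.1, fun i hi => ?_⟩
  obtain ⟨-, hw⟩ := isClosedTightWalk_iff.mp hw
  rcases Nat.lt_or_ge i w.length with hiw | hiw
  · have h := hw i hiw
    rwa [walkEdgeAt, List.drop_append_of_le_length hiw.le,
      List.take_append_of_le_length (by simp; omega)] at h
  · obtain rfl : k = 0 := by omega
    simpa [walkEdgeAt] using hw 0 (List.length_pos_of_ne_nil hne)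

/-- Every cyclic window of `a ++ c` is one of `a ++ b ++ c`, since the window starting at `b`
equals the one starting at `c`. -/
theorem IsClosedTightWalk.splice {a b c : List A} (hw : IsClosedTightWalk k E (a ++ b ++ c))
    (hc : k ≤ c.length) (hbc : (b ++ c).take k = c.take k) :
    IsClosedTightWalk k E (a ++ c) := by
  have hcut : ∀ l l' l'' : List A,
      (l ++ (b ++ (c ++ l'))).take k = (l ++ (c ++ l'')).take k := fun l l' l'' =>
    List.take_append_congr_right <| by
      rw [← List.append_assoc, List.take_append_of_le_length (by simp; omega), hbc,
        List.take_append_of_le_length hc]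
  obtain ⟨-, hw⟩ := isClosedTightWalk_iff.mp hw
  refine isClosedTightWalk_iff.mpr ⟨by simp; omega, fun i hi => ?_⟩
  simp only [List.length_append] at hw hi
  rcases Nat.lt_or_ge i a.length with hia | hia
  · have h := hw i (by omega)
    simp only [walkEdgeAt, List.append_assoc,
      List.drop_append_of_le_length hia.le] at h ⊢
    rwa [hcut] at h
  · obtain ⟨j, rfl⟩ := Nat.exists_eq_add_of_le hia
    have h := hw (a.length + (b.length + j)) (by omega)
    have hcut' := hcut (c.drop j ++ a) [] []
    simp only [walkEdgeAt, List.append_assoc, List.drop_length_add_append, List.append_nil,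
      List.drop_append_of_le_length (by omega : j ≤ c.length)] at h hcut' ⊢
    rwa [hcut'] at h

theorem IsClosedTightWalk.exists_window_eq {V : Finset A} (hE : ∀ e ∈ E, e ⊆ V ∧ e.card = k)
    (hk : 0 < k) (hw : IsClosedTightWalk k E w) (hlong : k * V.card ^ k < w.length) :
    ∃ p q, p < q ∧ q + k ≤ w.length ∧ p % k = q % k ∧ (w.drop p).take k = (w.drop q).take k := by
  have hkw := hw.1
  have htight := hw.isTightWalk (List.ne_nil_of_length_pos (by omega))
  set starts := Finset.range (w.length - k + 1)
  set windows := starts.image fun p => (w.drop p).take k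
  have hwindows : ∀ l ∈ windows, l.Nodup ∧ l.length = k ∧ ∀ x ∈ l, x ∈ V := by
    simp only [windows, starts, Finset.mem_image, Finset.mem_range]
    rintro _ ⟨p, hp, rfl⟩
    have hlen : ((w.drop p).take k).length = k := by simp; omega
    obtain ⟨hV, hcard⟩ := hE _ (htight.2 p (by omega))
    exact ⟨Multiset.toFinset_card_eq_card_iff_nodup.mp (hcard.trans hlen.symm), hlen,
      fun x hx => hV (List.mem_toFinset.mpr hx)⟩
  have hcard : (Finset.range k ×ˢ windows).card < starts.card := by
    rw [Finset.card_product, Finset.card_range, Finset.card_range]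
    calc k * windows.card ≤ k * V.card.descFactorial k :=
          Nat.mul_le_mul_left _ (List.card_le_descFactorial_of_nodup hwindows)
      _ < w.length - k + 1 := Nat.mul_descFactorial_lt_sub_add_one hlong
  obtain ⟨p, hp, q, hq, hpq, heq⟩ := Finset.exists_ne_map_eq_of_card_lt_of_maps_to hcard
    (f := fun p => (p % k, (w.drop p).take k))
    fun p hp => Finset.mem_product.mpr
      ⟨Finset.mem_range.mpr (Nat.mod_lt _ hk), Finset.mem_image_of_mem _ hp⟩
  simp only [starts, Finset.mem_range, Prod.mk.injEq] at hp hq heq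
  rcases hpq.lt_or_gt with hlt | hlt
  · exact ⟨p, q, hlt, by omega, heq⟩
  · exact ⟨q, p, hlt, by omega, heq.1.symm, heq.2.symm⟩

theorem IsClosedTightWalk.exists_shorter {V : Finset A} (hE : ∀ e ∈ E, e ⊆ V ∧ e.card = k)
    (hk : 0 < k) (hw : IsClosedTightWalk k E w) (hlong : k * V.card ^ k < w.length) :
    ∃ w', IsClosedTightWalk k E w' ∧ w'.length < w.length ∧ SameEndsAndResidue k w' w := by
  obtain ⟨p, q, hpq, hqL, hmod, hwin⟩ := hw.exists_window_eq hE hk hlong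
  set a := w.take p
  set b := (w.drop p).take (q - p)
  set c := w.drop q
  have hbc : b ++ c = w.drop p := by
    rw [← List.take_append_drop (q - p) (w.drop p), List.drop_drop, Nat.add_sub_cancel' hpq.le]
  have hsplit : w = a ++ b ++ c := by rw [List.append_assoc, hbc, List.take_append_drop]
  have hc : k ≤ c.length := by simp only [c, List.length_drop]; omega
  have hlen : w.length = (a ++ c).length + (q - p) := by simp [a, c]; omega
  obtain ⟨m, hm⟩ := (Nat.modEq_iff_dvd' hpq.le).mp hmod
  refine ⟨a ++ c, (hsplit ▸ hw).splice hc (hbc ▸ hwin), by omega, ?_, ?_, ?_⟩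
  · rw [hsplit, List.append_assoc, List.take_append_congr_right (hbc ▸ hwin).symm]
  · rw [hsplit, List.drop_length_sub_append hc, List.drop_length_sub_append hc]
  · rw [hlen, hm, Nat.add_mul_mod_self_left]

end ClosedTightWalk

theorem IsClosedTightWalk.exists_short {k : ℕ} {V : Finset A} {E : Finset (Finset A)}
    {w : List A} (hE : ∀ e ∈ E, e ⊆ V ∧ e.card = k) (hk : 0 < k) (hw : IsClosedTightWalk k E w) :
    ∃ w', IsClosedTightWalk k E w' ∧ w'.length ≤ k * V.card ^ k ∧ SameEndsAndResidue k w' w := by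
  by_cases hshort : w.length ≤ k * V.card ^ k
  · exact ⟨w, hw, hshort, rfl, rfl, rfl⟩
  obtain ⟨w₁, hw₁, hlt, hw₁w⟩ := hw.exists_shorter hE hk (by omega)
  obtain ⟨w₂, hw₂, hshort₂, hw₂w₁⟩ := hw₁.exists_short hE hk
  exact ⟨w₂, hw₂, hshort₂, hw₂w₁.trans hw₁w⟩
termination_by w.length

theorem short_closed_walk_general {B : Type*} [DecidableEq B] (k : ℕ) (hk : 1 ≤ k)
    (V : Finset B) (E : Finset (Finset B)) (hE : ∀ e ∈ E, e ⊆ V ∧ e.card = k)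
    (X Y : List B)
    (w : List B) (hw : IsClosedTightWalk k E w)
    (hstart : w.take k = X) (hend : w.drop (w.length - k) = Y) :
    ∃ w' : List B, IsClosedTightWalk k E w' ∧ w'.length ≤ k * V.card ^ k ∧
      w'.take k = X ∧ w'.drop (w'.length - k) = Y ∧ w'.length % k = w.length % k := by
  obtain ⟨w', hw', hshort, hstart', hend', hmod⟩ := hw.exists_short hE hk
  exact ⟨w', hw', hshort, hstart'.trans hstart, hend'.trans hend, hmod⟩

/-- short closed walks with prescribed ends and residue. -/
theorem short_closed_walk {B : Type*} [DecidableEq B] (k : ℕ) (hk : 1 ≤ k)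
    (V : Finset B) (E : Finset (Finset B)) (hE : ∀ e ∈ E, e ⊆ V ∧ e.card = k)
    (X Y : List B) (hX : X.length = k) (hY : Y.length = k)
    (w : List B) (hw : IsClosedTightWalk k E w)
    (hstart : w.take k = X) (hend : w.drop (w.length - k) = Y) :
    ∃ w' : List B, IsClosedTightWalk k E w' ∧ w'.length ≤ k * V.card ^ k ∧
      w'.take k = X ∧ w'.drop (w'.length - k) = Y ∧ w'.length % k = w.length % k :=
  short_closed_walk_general k hk V E hE X Y w hw hstart hend
end
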